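/- arXiv:2505.00699 — 4 statements merged into one kernel-verified Lean document; each statement's English description precedes it below -/
import Mathlib

section
/- Let 𝔽 be a field, r a positive integer, and d₁, …, d_r and q nonnegative integers. Then there exists a minimal basis M(s) ∈ 𝔽[s]^{(r+q)×r} with column degrees d₁, …, d_r if and only if the following holds: if q = 0 then d₁ = ⋯ = d_r = 0. -/
open Polynomial Matrix

noncomputable section

variable {F : Type*} [Field F]

/-- The image of a polynomial matrix in the field of rational functions. -/
def ratMap {m n : ℕ} (P : Matrix (Fin m) (Fin n) F[X]) :
    Matrix (Fin m) (Fin n) (RatFunc F) :=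
  P.map (algebraMap F[X] (RatFunc F))

/-- Degree of a polynomial matrix: maximum of the degrees of its entries
(`⊥` for the zero matrix). -/
def matDegree {m n : ℕ} (P : Matrix (Fin m) (Fin n) F[X]) : WithBot ℕ :=
  Finset.univ.sup fun ij : Fin m × Fin n => (P ij.1 ij.2).degree

/-- Degree of the `j`-th column of a polynomial matrix. -/
def colDegree {m n : ℕ} (P : Matrix (Fin m) (Fin n) F[X]) (j : Fin n) : WithBot ℕ :=
  Finset.univ.sup fun i : Fin m => (P i j).degree

/-- Degree of the `j`-th column, as a natural number. -/
def colDegNat {m n : ℕ} (P : Matrix (Fin m) (Fin n) F[X]) (j : Fin n) : ℕ :=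
  Finset.univ.sup fun i : Fin m => (P i j).natDegree

/-- The highest-column-degree coefficient matrix. -/
def highCoeffMatrix {m n : ℕ} (P : Matrix (Fin m) (Fin n) F[X]) : Matrix (Fin m) (Fin n) F :=
  Matrix.of fun i j => (P i j).coeff (colDegNat P j)

/-- A polynomial matrix is column reduced (column proper) if its
highest-column-degree coefficient matrix has full rank. -/
def IsColumnReduced {m n : ℕ} (P : Matrix (Fin m) (Fin n) F[X]) : Prop :=
  (highCoeffMatrix P).rank = min m n

/-- A polynomial matrix `N ∈ 𝔽[s]^{m×r}` is a minimal basis if `N(s₀)` has rank `r`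
for every `s₀` in an algebraic closure of `𝔽` and `N` is column reduced. -/
def IsMinimalBasis {m r : ℕ} (N : Matrix (Fin m) (Fin r) F[X]) : Prop :=
  (∀ s₀ : AlgebraicClosure F, (N.map fun p => (aeval s₀) p).rank = r) ∧
    IsColumnReduced N

/-- The `𝔽(s)`-subspace spanned by the columns of a rational matrix. -/
def colSpace {m n : ℕ} (R : Matrix (Fin m) (Fin n) (RatFunc F)) :
    Submodule (RatFunc F) (Fin m → RatFunc F) :=
  LinearMap.range R.mulVecLin

/-- A square polynomial matrix is unimodular if its determinant is a nonzero
element of `𝔽`. -/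
def IsUnimodular {r : ℕ} (U : Matrix (Fin r) (Fin r) F[X]) : Prop :=
  ∃ c : F, c ≠ 0 ∧ U.det = Polynomial.C c

/-- The `m × n` matrix whose `(i,i)` entry is `α i` for `i < r` and whose other
entries are `0`. -/
def smithMatrix (m n : ℕ) {r : ℕ} (α : Fin r → F[X]) : Matrix (Fin m) (Fin n) F[X] :=
  Matrix.of fun i j =>
    if h : (i : ℕ) = (j : ℕ) ∧ (i : ℕ) < r then α ⟨(i : ℕ), h.2⟩ else 0

/-- `A` has `α 0 ∣ ⋯ ∣ α (r-1)` as invariant factors. -/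
def HasInvariantFactors {m n r : ℕ} (A : Matrix (Fin m) (Fin n) F[X])
    (α : Fin r → F[X]) : Prop :=
  ∃ U : Matrix (Fin m) (Fin m) F[X], ∃ V : Matrix (Fin n) (Fin n) F[X],
    IsUnimodular U ∧ IsUnimodular V ∧ U * A * V = smithMatrix m n α

/-- `M_k(A)`: the maximum of the degrees of the `k×k` minors of `A`. -/
def maxMinorDegree {m n : ℕ} (A : Matrix (Fin m) (Fin n) F[X]) (k : ℕ) : WithBot ℕ :=
  Finset.univ.sup fun fg : (Fin k → Fin m) × (Fin k → Fin n) =>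
    ((A.submatrix fg.1 fg.2).det).degree

/-- `A` (of degree `d`) has `f 0 ≤ ⋯ ≤ f (r-1)` as partial multiplicities of `∞`:
`f 1 + ⋯ + f k = k·d − M_k(A)` for `1 ≤ k ≤ r`. -/
def HasInftyPartialMults {m n : ℕ} (A : Matrix (Fin m) (Fin n) F[X]) (d : ℕ)
    {r : ℕ} (f : Fin r → ℕ) : Prop :=
  ∀ k : ℕ, 1 ≤ k → k ≤ r →
    maxMinorDegree A k + (((∑ i : Fin r, if (i : ℕ) < k then f i else 0) : ℕ) : WithBot ℕ)
      = ((k * d : ℕ) : WithBot ℕ)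

/-- A rational function is proper if the degree of its numerator is at most the
degree of its denominator. -/
def IsProperRat (x : RatFunc F) : Prop := x.num.degree ≤ x.denom.degree

/-- A rational function is biproper if it is nonzero and the degrees of its
numerator and denominator are equal. -/
def IsBiproperRat (x : RatFunc F) : Prop := x ≠ 0 ∧ x.num.degree = x.denom.degree

/-- A square rational matrix is biproper if all its entries are proper and its
determinant is a biproper rational function. -/
def IsBiproper {m : ℕ} (B : Matrix (Fin m) (Fin m) (RatFunc F)) : Prop :=
  (∀ i j, IsProperRat (B i j)) ∧ IsBiproperRat B.det

/-- The `m × n` matrix whose `(i,i)` entry is `s^{-q i}` for `i < r` and whose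
other entries are `0`. -/
def smithAtInfty (F : Type*) [Field F] (m n : ℕ) {r : ℕ} (q : Fin r → ℤ) :
    Matrix (Fin m) (Fin n) (RatFunc F) :=
  Matrix.of fun i j =>
    if h : (i : ℕ) = (j : ℕ) ∧ (i : ℕ) < r
    then (RatFunc.X : RatFunc F) ^ (-(q ⟨(i : ℕ), h.2⟩)) else 0

/-- `R` has `q 0 ≤ ⋯ ≤ q (r-1)` as invariant orders at infinity. -/
def HasInvOrdersAtInfty {m n r : ℕ} (R : Matrix (Fin m) (Fin n) (RatFunc F))
    (q : Fin r → ℤ) : Prop :=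
  ∃ B₁ : Matrix (Fin m) (Fin m) (RatFunc F), ∃ B₂ : Matrix (Fin n) (Fin n) (RatFunc F),
    IsBiproper B₁ ∧ IsBiproper B₂ ∧ B₁ * R * B₂ = smithAtInfty F m n q

/-- The `m × n` matrix whose `(i,i)` entry is `ε i / ψ i` for `i < r` and whose
other entries are `0` (Smith–McMillan form). -/
def smithMcMillan (F : Type*) [Field F] (m n : ℕ) {r : ℕ} (ε ψ : Fin r → F[X]) :
    Matrix (Fin m) (Fin n) (RatFunc F) :=
  Matrix.of fun i j =>
    if h : (i : ℕ) = (j : ℕ) ∧ (i : ℕ) < r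
    then algebraMap F[X] (RatFunc F) (ε ⟨(i : ℕ), h.2⟩) /
         algebraMap F[X] (RatFunc F) (ψ ⟨(i : ℕ), h.2⟩)
    else 0

/-- `R` has the irreducible rational functions `ε i / ψ i` as invariant rational
functions. -/
def HasInvRatFns {m n r : ℕ} (R : Matrix (Fin m) (Fin n) (RatFunc F))
    (ε ψ : Fin r → F[X]) : Prop :=
  ∃ U : Matrix (Fin m) (Fin m) F[X], ∃ V : Matrix (Fin n) (Fin n) F[X],
    IsUnimodular U ∧ IsUnimodular V ∧ ratMap U * R * ratMap V = smithMcMillan F m n ε ψ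

/-- Partial sum of the first `k` entries of a finite integer sequence. -/
def psum {r : ℕ} (a : Fin r → ℤ) (k : ℕ) : ℤ :=
  ∑ i : Fin r, if (i : ℕ) < k then a i else 0

/-- Majorization `a ≺ b` of decreasing integer sequences. -/
def IsMajorizedBy {r : ℕ} (a b : Fin r → ℤ) : Prop :=
  (∀ k : ℕ, 1 ≤ k → k ≤ r - 1 → psum a k ≤ psum b k) ∧ psum a r = psum b r

/-- `R` has `k 0 ≥ ⋯ ≥ k (r-1)` as col-span minimal indices. -/
def HasColSpanMinIndices {m n r : ℕ} (R : Matrix (Fin m) (Fin n) (RatFunc F))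
    (k : Fin r → ℕ) : Prop :=
  ∃ K : Matrix (Fin m) (Fin r) F[X], IsMinimalBasis K ∧
    (∀ j, colDegree K j = (k j : WithBot ℕ)) ∧ colSpace (ratMap K) = colSpace R

/-- `R` has `l 0 ≥ ⋯ ≥ l (r-1)` as row-span minimal indices. -/
def HasRowSpanMinIndices {m n r : ℕ} (R : Matrix (Fin m) (Fin n) (RatFunc F))
    (l : Fin r → ℕ) : Prop :=
  HasColSpanMinIndices Rᵀ l

/-- `R` has `dd 0 ≥ ⋯ ≥ dd (p-1)` as right minimal indices. -/
def HasRightMinIndices {m n p : ℕ} (R : Matrix (Fin m) (Fin n) (RatFunc F))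
    (dd : Fin p → ℕ) : Prop :=
  ∃ N : Matrix (Fin n) (Fin p) F[X], IsMinimalBasis N ∧
    (∀ j, colDegree N j = (dd j : WithBot ℕ)) ∧
    colSpace (ratMap N) = LinearMap.ker R.mulVecLin

/-- `R` has `v 0 ≥ ⋯ ≥ v (p-1)` as left minimal indices. -/
def HasLeftMinIndices {m n p : ℕ} (R : Matrix (Fin m) (Fin n) (RatFunc F))
    (v : Fin p → ℕ) : Prop :=
  HasRightMinIndices Rᵀ v



/-- If a square submatrix (row selection) is invertible, a matrix has full column rank. -/
lemma aux_rank_full {K : Type*} [Field K] {m n : ℕ} (A : Matrix (Fin m) (Fin n) K)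
    (g : Fin n → Fin m) (h : IsUnit (A.submatrix g id).det) : A.rank = n := by
  have hP : A.submatrix g id = ((1 : Matrix (Fin m) (Fin m) K).submatrix g id) * A := by
    ext a j
    simp [Matrix.mul_apply, Matrix.one_apply]
  have h1 : (A.submatrix g id).rank = n := by
    rw [Matrix.rank_of_isUnit _ ((Matrix.isUnit_iff_isUnit_det _).2 h), Fintype.card_fin]
  refine le_antisymm (Matrix.rank_le_width A) ?_
  calc n = (A.submatrix g id).rank := h1.symm
    _ ≤ A.rank := by rw [hP]; exact Matrix.rank_mul_le_right _ _

lemma aux_isUnit_det_of_rank {K : Type*} [Field K] {n : ℕ} (A : Matrix (Fin n) (Fin n) K)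
    (h : A.rank = n) : IsUnit A.det := by
  have htop : LinearMap.range A.mulVecLin = ⊤ := by
    apply Submodule.eq_top_of_finrank_eq
    rw [← Matrix.rank]
    rw [h, Module.finrank_pi]
    simp
  have hsurj : Function.Surjective A.mulVec := by
    intro v
    obtain ⟨w, hw⟩ := LinearMap.range_eq_top.mp htop v
    exact ⟨w, by simpa using hw⟩
  exact (Matrix.isUnit_iff_isUnit_det _).1 (Matrix.mulVec_surjective_iff_isUnit.1 hsurj)

lemma aux_coeff_prod {K : Type*} [Field K] {ι : Type*} (s : Finset ι) (p : ι → K[X]) (D : ι → ℕ)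
    (h : ∀ i ∈ s, (p i).natDegree ≤ D i) :
    (∏ i ∈ s, p i).coeff (∑ i ∈ s, D i) = ∏ i ∈ s, (p i).coeff (D i) := by
  classical
  induction s using Finset.cons_induction with
  | empty => simp
  | cons a s ha ih =>
    rw [Finset.prod_cons, Finset.sum_cons,
      Polynomial.coeff_mul_add_eq_of_natDegree_le (h a (Finset.mem_cons_self a s))
        ((Polynomial.natDegree_prod_le s p).trans
          (Finset.sum_le_sum fun i hi => h i (Finset.mem_cons_of_mem hi))),
      ih fun i hi => h i (Finset.mem_cons_of_mem hi), Finset.prod_cons]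

lemma aux_det_coeff {K : Type*} [Field K] {n : ℕ} (P : Matrix (Fin n) (Fin n) K[X])
    (D : Fin n → ℕ) (h : ∀ i j, (P i j).natDegree ≤ D j) :
    P.det.coeff (∑ j, D j) = (Matrix.of fun i j => (P i j).coeff (D j)).det := by
  rw [Matrix.det_apply, Matrix.det_apply, Polynomial.finset_sum_coeff]
  refine Finset.sum_congr rfl fun σ _ => ?_
  rw [Polynomial.coeff_smul, aux_coeff_prod _ _ _ (fun j _ => h (σ j) j)]
  rfl



lemma aux_colDegNat {F : Type*} [Field F] {m n : ℕ} (hm : 0 < m)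
    (P : Matrix (Fin m) (Fin n) F[X]) (j : Fin n) (k : ℕ)
    (h : colDegree P j = (k : WithBot ℕ)) :
    colDegNat P j = k ∧ ∀ i, (P i j).natDegree ≤ k := by
  have : Nonempty (Fin m) := ⟨⟨0, hm⟩⟩
  have hle : ∀ i, (P i j).degree ≤ (k : WithBot ℕ) := fun i =>
    h ▸ Finset.le_sup (f := fun i => (P i j).degree) (Finset.mem_univ i)
  have hnle : ∀ i, (P i j).natDegree ≤ k := fun i =>
    Polynomial.natDegree_le_iff_degree_le.2 (hle i)
  obtain ⟨i₀, -, hi₀⟩ := Finset.exists_mem_eq_sup Finset.univ Finset.univ_nonempty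
    (fun i => (P i j).degree)
  have hdeg0 : (P i₀ j).degree = (k : WithBot ℕ) := by
    rw [← hi₀, ← colDegree, h]
  refine ⟨le_antisymm (Finset.sup_le fun i _ => hnle i) ?_, hnle⟩
  have : (P i₀ j).natDegree = k := Polynomial.natDegree_eq_of_degree_eq_some hdeg0
  exact this ▸ Finset.le_sup (f := fun i => (P i j).natDegree) (Finset.mem_univ i₀)


lemma aux_forward {F : Type*} [Field F] {r : ℕ} (hr : 0 < r)
    (M : Matrix (Fin r) (Fin r) F[X]) (d : Fin r → ℕ)
    (hrank : ∀ s₀ : AlgebraicClosure F, (M.map fun p => (Polynomial.aeval s₀) p).rank = r)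
    (hcr : (highCoeffMatrix M).rank = r)
    (hdeg : ∀ j, colDegree M j = (d j : WithBot ℕ)) : ∀ j, d j = 0 := by
  have hnat : ∀ j, colDegNat M j = d j := fun j => (aux_colDegNat hr M j (d j) (hdeg j)).1
  have hbd : ∀ i j, (M i j).natDegree ≤ d j := fun i j =>
    (aux_colDegNat hr M j (d j) (hdeg j)).2 i
  have hH : IsUnit (highCoeffMatrix M).det := aux_isUnit_det_of_rank _ hcr
  have hkey : (Matrix.det M).coeff (∑ j, d j) = (highCoeffMatrix M).det := by
    rw [aux_det_coeff M d hbd]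
    congr 1
    ext i j
    simp [highCoeffMatrix, hnat]
  have hne : (Matrix.det M).coeff (∑ j, d j) ≠ 0 := by
    rw [hkey]; exact hH.ne_zero
  have hMne : Matrix.det M ≠ 0 := fun h0 => hne (by rw [h0, Polynomial.coeff_zero])
  have hdeg0 : (Matrix.det M).natDegree = 0 := by
    by_contra h0
    set p := (Matrix.det M).map (algebraMap F (AlgebraicClosure F)) with hp
    have hpdeg : p.degree = (Matrix.det M).degree :=
      Polynomial.degree_map_eq_of_injective (algebraMap F (AlgebraicClosure F)).injective _
    have hpne : p.degree ≠ 0 := by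
      rw [hpdeg, Polynomial.degree_eq_natDegree hMne]
      exact_mod_cast fun h => h0 (by exact_mod_cast h)
    obtain ⟨s₀, hs₀⟩ := IsAlgClosed.exists_root p hpne
    have hd0 : (M.map fun pq => (Polynomial.aeval s₀) pq).det = 0 := by
      have h1 : (M.map fun pq => (Polynomial.aeval s₀) pq).det
          = (Polynomial.aeval s₀) (Matrix.det M) :=
        ((Polynomial.aeval s₀ : F[X] →ₐ[F] AlgebraicClosure F).toRingHom.map_det M).symm
      rw [h1, Polynomial.aeval_def, ← Polynomial.eval_map]
      exact hs₀
    have := aux_isUnit_det_of_rank _ (hrank s₀)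
    rw [hd0] at this
    exact this.ne_zero rfl
  intro j
  have hsum : (∑ j, d j) = 0 := by
    have := Polynomial.le_natDegree_of_ne_zero hne
    omega
  exact Finset.sum_eq_zero_iff.mp hsum j (Finset.mem_univ j)


lemma aux_construct {F : Type*} [Field F] {r q : ℕ} (hr : 0 < r) (d : Fin r → ℕ)
    (h : q = 0 → ∀ j, d j = 0) :
    ∃ M : Matrix (Fin (r + q)) (Fin r) F[X], IsMinimalBasis M ∧
      ∀ j, colDegree M j = (d j : WithBot ℕ) := by
  classical
  set M : Matrix (Fin (r + q)) (Fin r) F[X] := Matrix.of fun i j =>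
    if (i : ℕ) = (j : ℕ) then 1
    else if (i : ℕ) = (j : ℕ) + 1 then Polynomial.X ^ (d j) else 0 with hM
  have hMe : ∀ i j, M i j =
      if (i : ℕ) = (j : ℕ) then 1
      else if (i : ℕ) = (j : ℕ) + 1 then Polynomial.X ^ (d j) else 0 := fun i j => rfl
  -- column degrees
  have hcd : ∀ j, colDegree M j = (d j : WithBot ℕ) := by
    intro j
    apply le_antisymm
    · apply Finset.sup_le
      intro i _
      rw [hMe]
      by_cases h1 : (i : ℕ) = (j : ℕ)
      · simp [h1, Polynomial.degree_one]
      · by_cases h2 : (i : ℕ) = (j : ℕ) + 1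
        · simp [h1, h2, Polynomial.degree_X_pow]
        · simp [h1, h2]
    · rcases lt_or_ge ((j : ℕ) + 1) (r + q) with hlt | hge
      · have he : M ⟨(j : ℕ) + 1, hlt⟩ j = Polynomial.X ^ (d j) := by
          rw [hMe]; simp
        calc ((d j : ℕ) : WithBot ℕ) = (M ⟨(j : ℕ) + 1, hlt⟩ j).degree := by
              rw [he, Polynomial.degree_X_pow]
          _ ≤ colDegree M j := Finset.le_sup (f := fun i => (M i j).degree) (Finset.mem_univ _)
      · have hq0 : q = 0 := by have := j.isLt; omega
        have hd0 : d j = 0 := h hq0 j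
        have hjlt : (j : ℕ) < r + q := by have := j.isLt; omega
        have he : M ⟨(j : ℕ), hjlt⟩ j = 1 := by rw [hMe]; simp
        calc ((d j : ℕ) : WithBot ℕ) = (M ⟨(j : ℕ), hjlt⟩ j).degree := by
              rw [he, Polynomial.degree_one, hd0]; rfl
          _ ≤ colDegree M j := Finset.le_sup (f := fun i => (M i j).degree) (Finset.mem_univ _)
  have hcdn : ∀ j, colDegNat M j = d j := fun j =>
    (aux_colDegNat (by omega) M j (d j) (hcd j)).1
  -- entries of the highest-column-degree coefficient matrix
  have hHe : ∀ i j, highCoeffMatrix M i j =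
      if (i : ℕ) = (j : ℕ) then (if d j = 0 then 1 else 0)
      else if (i : ℕ) = (j : ℕ) + 1 then 1 else 0 := by
    intro i j
    show (M i j).coeff (colDegNat M j) = _
    rw [hcdn, hMe]
    by_cases h1 : (i : ℕ) = (j : ℕ)
    · rcases Nat.eq_zero_or_pos (d j) with hd0 | hdpos
      · simp [h1, hd0]
      · simp [h1, Polynomial.coeff_one, Nat.pos_iff_ne_zero.mp hdpos,
          (Nat.pos_iff_ne_zero.mp hdpos : d j ≠ 0)]
    · by_cases h2 : (i : ℕ) = (j : ℕ) + 1
      · simp [h1, h2, Polynomial.coeff_X_pow]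
      · simp [h1, h2]
  refine ⟨M, ⟨?_, ?_⟩, hcd⟩
  · -- full rank at every point of the algebraic closure
    intro s₀
    apply aux_rank_full _ (fun j : Fin r => (⟨(j : ℕ), by omega⟩ : Fin (r + q)))
    have htri : (((M.map fun p => (Polynomial.aeval s₀) p).submatrix
        (fun j : Fin r => (⟨(j : ℕ), by omega⟩ : Fin (r + q))) id)).BlockTriangular
        OrderDual.toDual := by
      intro a b hab
      rw [OrderDual.toDual_lt_toDual] at hab
      have hab' : (a : ℕ) < (b : ℕ) := hab
      simp only [Matrix.submatrix_apply, Matrix.map_apply, id]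
      rw [hMe]
      simp [Nat.ne_of_lt hab', Nat.ne_of_lt (Nat.lt_succ_of_lt hab')]
    have hdiag : ∀ a : Fin r,
        ((M.map fun p => (Polynomial.aeval s₀) p).submatrix
          (fun j : Fin r => (⟨(j : ℕ), by omega⟩ : Fin (r + q))) id) a a = 1 := by
      intro a
      simp only [Matrix.submatrix_apply, Matrix.map_apply, id]
      rw [hMe]
      simp
    rw [Matrix.det_of_lowerTriangular _ htri, Finset.prod_congr rfl (fun a _ => hdiag a),
      Finset.prod_const_one]
    exact isUnit_one
  · -- column reduced
    show (highCoeffMatrix M).rank = min (r + q) r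
    rw [min_eq_right (Nat.le_add_right r q)]
    rcases Nat.eq_zero_or_pos q with hq0 | hqpos
    · have hd0 := h hq0
      apply aux_rank_full _ (fun j : Fin r => (⟨(j : ℕ), by omega⟩ : Fin (r + q)))
      have htri : ((highCoeffMatrix M).submatrix
          (fun j : Fin r => (⟨(j : ℕ), by omega⟩ : Fin (r + q))) id).BlockTriangular
          OrderDual.toDual := by
        intro a b hab
        rw [OrderDual.toDual_lt_toDual] at hab
        have hab' : (a : ℕ) < (b : ℕ) := hab
        simp only [Matrix.submatrix_apply, id]
        rw [hHe]
        simp [Nat.ne_of_lt hab', Nat.ne_of_lt (Nat.lt_succ_of_lt hab')]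
      have hdiag : ∀ a : Fin r, ((highCoeffMatrix M).submatrix
          (fun j : Fin r => (⟨(j : ℕ), by omega⟩ : Fin (r + q))) id) a a = 1 := by
        intro a
        simp only [Matrix.submatrix_apply, id]
        rw [hHe]
        simp [hd0 a]
      rw [Matrix.det_of_lowerTriangular _ htri, Finset.prod_congr rfl (fun a _ => hdiag a),
        Finset.prod_const_one]
      exact isUnit_one
    · apply aux_rank_full _ (fun j : Fin r => (⟨(j : ℕ) + 1, by omega⟩ : Fin (r + q)))
      have htri : ((highCoeffMatrix M).submatrix
          (fun j : Fin r => (⟨(j : ℕ) + 1, by omega⟩ : Fin (r + q))) id).BlockTriangular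
          id := by
        intro a b hab
        have hab' : (b : ℕ) < (a : ℕ) := hab
        simp only [Matrix.submatrix_apply, id]
        rw [hHe]
        have h1 : (a : ℕ) + 1 ≠ (b : ℕ) := by omega
        have h2 : (a : ℕ) + 1 ≠ (b : ℕ) + 1 := by omega
        simp [h1, h2]
        omega
      have hdiag : ∀ a : Fin r, ((highCoeffMatrix M).submatrix
          (fun j : Fin r => (⟨(j : ℕ) + 1, by omega⟩ : Fin (r + q))) id) a a = 1 := by
        intro a
        simp only [Matrix.submatrix_apply, id]
        rw [hHe]
        simp
      rw [Matrix.det_of_upperTriangular htri, Finset.prod_congr rfl (fun a _ => hdiag a),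
        Finset.prod_const_one]
      exact isUnit_one

theorem statement1 {r q : ℕ} (hr : 0 < r) (d : Fin r → ℕ) :
    (∃ M : Matrix (Fin (r + q)) (Fin r) F[X], IsMinimalBasis M ∧
        ∀ j, colDegree M j = (d j : WithBot ℕ)) ↔
      (q = 0 → ∀ j, d j = 0) := by
  constructor
  · rintro ⟨M, ⟨hrank, hcr⟩, hdeg⟩ hq
    subst hq
    refine aux_forward hr M d hrank ?_ hdeg
    have := hcr
    unfold IsColumnReduced at this
    simpa using this
  · intro h
    exact aux_construct hr d h

end
end

section
/- Let 𝔽 be a field and let A(s) ∈ 𝔽(s)^{m×n} be a rational matrix of rank r, with col-span minimal indices k₁, …, k_r, row-span minimal indices ℓ₁, …, ℓ_r, right minimal indices d₁, …, d_{n−r}, and left minimal indices v₁, …, v_{m−r}. Then Σ_{i=1}^{m−r} v_i = Σ_{i=1}^{r} k_i and Σ_{i=1}^{n−r} d_i = Σ_{i=1}^{r} ℓ_i. -/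
open Polynomial Matrix

noncomputable section

variable {F : Type*} [Field F]

set_option maxHeartbeats 2000000

namespace MinIdxAux


variable {R : Type*} [CommRing R]

/-- Determinant under independent row/column reindexing equivs, up to a unit. -/
lemma det_submatrix_equiv_units {ι κ : Type*} [DecidableEq ι] [Fintype ι]
    [DecidableEq κ] [Fintype κ] (e e' : κ ≃ ι) (M : Matrix ι ι R) :
    ∃ u : Rˣ, (M.submatrix e' e).det = (u : R) * M.det := by
  refine ⟨Units.map (Int.castRingHom R).toMonoidHom
    (Equiv.Perm.sign (e'.trans e.symm)), ?_⟩
  have h1 : M.submatrix e' e = (M.submatrix e e).submatrix (e'.trans e.symm) id := by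
    ext x y
    simp [Matrix.submatrix_apply]
  rw [h1, Matrix.det_permute, Matrix.det_submatrix_equiv_self]
  rfl

/-- determinant of a square matrix whose columns (indexed via `e`) are the columns of `A`
together with distinct standard basis vectors (at positions given by `e' ∘ inr`):
it equals the complementary minor of `A`, up to a unit. -/
lemma det_cols_units {n : ℕ} {κ₁ κ₂ : Type*} [DecidableEq κ₁] [Fintype κ₁]
    [DecidableEq κ₂] [Fintype κ₂]
    (e e' : (κ₁ ⊕ κ₂) ≃ Fin n) (A : Matrix (Fin n) κ₁ R) :
    ∃ u : Rˣ,
      (Matrix.of fun i j => Sum.elim (fun a => A i a)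
          (fun b => if i = e' (Sum.inr b) then (1:R) else 0) (e.symm j)
        : Matrix (Fin n) (Fin n) R).det
      = (u:R) * (A.submatrix (fun a => e' (Sum.inl a)) id).det := by
  set Z : Matrix (Fin n) (Fin n) R := Matrix.of fun i j => Sum.elim (fun a => A i a)
      (fun b => if i = e' (Sum.inr b) then (1:R) else 0) (e.symm j) with hZ
  have key : Z.submatrix e' e = Matrix.fromBlocks
      (A.submatrix (fun a => e' (Sum.inl a)) id) 0
      (A.submatrix (fun b => e' (Sum.inr b)) id) 1 := by
    ext x y
    cases x <;> cases y <;>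
      simp [hZ, Matrix.submatrix_apply, Matrix.fromBlocks, e'.injective.eq_iff,
        Matrix.one_apply, eq_comm]
  obtain ⟨u, hu⟩ := det_submatrix_equiv_units e e' Z
  refine ⟨u⁻¹, ?_⟩
  have := congrArg Matrix.det key
  rw [hu, Matrix.det_fromBlocks_zero₁₂, Matrix.det_one, mul_one] at this
  rw [← this, ← mul_assoc, Units.inv_mul, one_mul]



section FieldRank
variable {K : Type*} [Field K] {n ρ : ℕ}

lemma rank_eq_of_det_submatrix_ne_zero {M : Matrix (Fin n) (Fin ρ) K} {f : Fin ρ → Fin n}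
    (h : (M.submatrix f id).det ≠ 0) : M.rank = ρ := by
  have hU : IsUnit (M.submatrix f id) :=
    (Matrix.isUnit_iff_isUnit_det _).mpr (isUnit_iff_ne_zero.mpr h)
  have h1 : (M.submatrix f id).rank = ρ := by
    simpa using Matrix.rank_of_isUnit _ hU
  have h2 : (M.submatrix f id).rank ≤ M.rank := by
    have hcomp : (M.submatrix f id).mulVecLin
        = (LinearMap.funLeft K K f).comp M.mulVecLin := by
      apply LinearMap.ext; intro x; funext i
      simp [Matrix.mulVecLin_apply, Matrix.mulVec, Matrix.submatrix_apply, dotProduct]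
    rw [Matrix.rank, Matrix.rank, hcomp, LinearMap.range_comp]
    exact Submodule.finrank_map_le _ _
  have h3 : M.rank ≤ ρ := by simpa using Matrix.rank_le_width M
  omega

/-- From full column rank, extract a set of rows with nonzero minor, with
monotone enumeration. -/
lemma exists_finset_det_ne_zero {M : Matrix (Fin n) (Fin ρ) K} (h : M.rank = ρ) :
    ∃ (s : Finset (Fin n)) (hs : s.card = ρ),
      (M.submatrix (fun i => s.orderEmbOfFin hs i) id).det ≠ 0 := by
  classical
  -- rows span ⊤
  have hspan : Submodule.span K (Set.range M) = ⊤ := by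
    apply Submodule.eq_top_of_finrank_eq
    rw [show Set.range M = Set.range M.row from rfl, ← Matrix.rank_eq_finrank_span_row M, h, Module.finrank_pi]
    simp
  obtain ⟨b, hbsub, hbspan, hbli⟩ := exists_linearIndependent K (Set.range M)
  rw [hspan] at hbspan
  have : FiniteDimensional K (Fin ρ → K) := inferInstance
  have hbfin : b.Finite := hbli.setFinite
  have hbfintype : Fintype b := hbfin.fintype
  have hcard : Fintype.card b = ρ := by
    have hB : Module.Basis b K (Fin ρ → K) := Module.Basis.mk hbli (by rw [Subtype.range_coe, hbspan])
    have := Module.finrank_eq_card_basis hB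
    rw [Module.finrank_pi] at this
    simpa using this.symm
  -- choose row indices
  have hchoice : ∀ x : b, ∃ i : Fin n, M i = (x : Fin ρ → K) := fun x => hbsub x.2
  choose g hg using hchoice
  have hginj : Function.Injective g := by
    intro x y hxy
    apply Subtype.ext
    rw [← hg x, ← hg y, hxy]
  -- the finset of selected rows
  let s : Finset (Fin n) := Finset.univ.image g
  have hs : s.card = ρ := by
    rw [Finset.card_image_of_injective _ hginj, Finset.card_univ, hcard]
  refine ⟨s, hs, ?_⟩
  -- rows of the submatrix are a permutation of b, hence linearly independent
  set emb := fun i => s.orderEmbOfFin hs i with hemb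
  have hmem : ∀ i, emb i ∈ s := fun i => by
    have := Finset.orderEmbOfFin_mem s hs i
    simpa [hemb] using this
  have hrows : LinearIndependent K (fun i : Fin ρ => M (emb i)) := by
    -- each row M (emb i) is an element of b, and i ↦ that element is injective
    have hx : ∀ i : Fin ρ, ∃ x : b, g x = emb i := by
      intro i
      have := hmem i
      simp only [s, Finset.mem_image, Finset.mem_univ, true_and] at this
      obtain ⟨x, hx⟩ := this
      exact ⟨x, hx⟩
    choose ξ hξ using hx
    have hξinj : Function.Injective ξ := by
      intro i j hij
      have : emb i = emb j := by rw [← hξ i, ← hξ j, hij]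
      exact (s.orderEmbOfFin hs).injective this
    have : (fun i : Fin ρ => M (emb i)) = (fun x : b => (x : Fin ρ → K)) ∘ ξ := by
      funext i
      simp only [Function.comp_apply]
      rw [← hξ i, hg (ξ i)]
    rw [this]
    exact hbli.comp ξ hξinj
  have : LinearIndependent K (M.submatrix emb id).row := by
    exact hrows
  intro hdet
  rw [Matrix.linearIndependent_rows_iff_isUnit, Matrix.isUnit_iff_isUnit_det] at this
  rw [hdet] at this
  simp at this

end FieldRank


variable {R : Type*} [CommRing R]

lemma coeff_mul_of_degree_le {p q : R[X]} {a b : ℕ} (hp : p.degree ≤ a) (hq : q.degree ≤ b) :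
    (p * q).coeff (a + b) = p.coeff a * q.coeff b := by
  rw [Polynomial.coeff_mul]
  apply Finset.sum_eq_single (a, b)
  · rintro ⟨x, y⟩ hxy hne
    rw [Finset.HasAntidiagonal.mem_antidiagonal] at hxy
    have : a < x ∨ b < y := by
      by_contra hcon
      push_neg at hcon
      apply hne
      have hx : x = a := by omega
      have hy : y = b := by omega
      simp [hx, hy]
    rcases this with h | h
    · have : p.coeff x = 0 := Polynomial.coeff_eq_zero_of_degree_lt
        (lt_of_le_of_lt hp (by exact_mod_cast h))
      simp [this]
    · have : q.coeff y = 0 := Polynomial.coeff_eq_zero_of_degree_lt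
        (lt_of_le_of_lt hq (by exact_mod_cast h))
      simp [this]
  · intro h
    exact absurd (by simp : (a, b) ∈ Finset.HasAntidiagonal.antidiagonal (a + b)) h

lemma coeff_prod_of_degree_le {ι : Type*} (s : Finset ι) (q : ι → R[X]) (c : ι → ℕ)
    (h : ∀ i ∈ s, (q i).degree ≤ c i) :
    (∏ i ∈ s, q i).coeff (∑ i ∈ s, c i) = ∏ i ∈ s, (q i).coeff (c i) := by
  classical
  induction s using Finset.cons_induction with
  | empty => simp
  | cons a s ha ih =>
    rw [Finset.prod_cons, Finset.sum_cons, Finset.prod_cons]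
    rw [coeff_mul_of_degree_le (h a (Finset.mem_cons_self a s)) ?_]
    · rw [ih (fun i hi => h i (Finset.mem_cons_of_mem hi))]
    · calc (∏ i ∈ s, q i).degree ≤ ∑ i ∈ s, (q i).degree := Polynomial.degree_prod_le s q
        _ ≤ ∑ i ∈ s, ((c i : ℕ) : WithBot ℕ) :=
            Finset.sum_le_sum (fun i hi => h i (Finset.mem_cons_of_mem hi))
        _ = ((∑ i ∈ s, c i : ℕ) : WithBot ℕ) := by
            rw [Nat.cast_sum]

lemma degree_det_le_sum {ρ : ℕ} (P : Matrix (Fin ρ) (Fin ρ) R[X]) (c : Fin ρ → ℕ)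
    (hc : ∀ i j, (P i j).degree ≤ c j) :
    P.det.degree ≤ ((∑ j, c j : ℕ) : WithBot ℕ) := by
  rw [Matrix.det_apply]
  refine le_trans (Polynomial.degree_sum_le _ _) ?_
  apply Finset.sup_le
  intro σ _
  rcases Int.units_eq_one_or (Equiv.Perm.sign σ) with h | h <;> rw [h]
  · rw [one_smul]
    calc (∏ i, P (σ i) i).degree ≤ ∑ i, (P (σ i) i).degree := Polynomial.degree_prod_le _ _
      _ ≤ ∑ i, ((c i : ℕ) : WithBot ℕ) := Finset.sum_le_sum (fun i _ => hc (σ i) i)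
      _ = ((∑ j, c j : ℕ) : WithBot ℕ) := by rw [Nat.cast_sum]
  · rw [Units.neg_smul, one_smul, Polynomial.degree_neg]
    calc (∏ i, P (σ i) i).degree ≤ ∑ i, (P (σ i) i).degree := Polynomial.degree_prod_le _ _
      _ ≤ ∑ i, ((c i : ℕ) : WithBot ℕ) := Finset.sum_le_sum (fun i _ => hc (σ i) i)
      _ = ((∑ j, c j : ℕ) : WithBot ℕ) := by rw [Nat.cast_sum]

lemma coeff_det_sum {ρ : ℕ} (P : Matrix (Fin ρ) (Fin ρ) R[X]) (c : Fin ρ → ℕ)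
    (hc : ∀ i j, (P i j).degree ≤ c j) :
    P.det.coeff (∑ j, c j) = (Matrix.of fun i j => (P i j).coeff (c j)).det := by
  rw [Matrix.det_apply, Matrix.det_apply, Polynomial.finset_sum_coeff]
  apply Finset.sum_congr rfl
  intro σ _
  have hprod : (∏ i, P (σ i) i).coeff (∑ j, c j) = ∏ i, (P (σ i) i).coeff (c i) :=
    coeff_prod_of_degree_le Finset.univ (fun i => P (σ i) i) c (fun i _ => hc (σ i) i)
  rcases Int.units_eq_one_or (Equiv.Perm.sign σ) with h | h <;> rw [h]
  · rw [one_smul, one_smul, hprod]; rfl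
  · rw [Units.neg_smul, Units.neg_smul, one_smul, one_smul, Polynomial.coeff_neg, hprod]; rfl


end MinIdxAux

namespace MinIdxAux

section Layer4
variable {F : Type*} [Field F]

lemma isUnit_of_forall_aeval_ne_zero (p : F[X])
    (h : ∀ s₀ : AlgebraicClosure F, (aeval s₀) p ≠ 0) : IsUnit p := by
  rw [Polynomial.isUnit_iff_degree_eq_zero]
  by_contra hdeg
  obtain ⟨x, hx⟩ := IsAlgClosed.exists_root (p.map (algebraMap F (AlgebraicClosure F)))
    (by rwa [Polynomial.degree_map_eq_of_injective (algebraMap F (AlgebraicClosure F)).injective])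
  apply h x
  rw [Polynomial.aeval_def, ← Polynomial.eval_map]
  exact hx

def sumEquivOfCompl {n p q : ℕ} (s : Finset (Fin n)) (hs : s.card = p) (hsc : sᶜ.card = q) :
    (Fin p ⊕ Fin q) ≃ Fin n :=
  Equiv.ofBijective
    (Sum.elim (fun a => s.orderEmbOfFin hs a) (fun b => sᶜ.orderEmbOfFin hsc b))
    (by
      rw [Fintype.bijective_iff_injective_and_card]
      constructor
      · rintro (a | a) (b | b) h <;> simp only [Sum.elim_inl, Sum.elim_inr] at h
        · exact congrArg Sum.inl ((s.orderEmbOfFin hs).injective h)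
        · exact absurd (h ▸ Finset.orderEmbOfFin_mem s hs a)
            (Finset.mem_compl.mp (Finset.orderEmbOfFin_mem sᶜ hsc b))
        · exact absurd (h ▸ Finset.orderEmbOfFin_mem sᶜ hsc a)
            (fun hc => (Finset.mem_compl.mp hc) (Finset.orderEmbOfFin_mem s hs b))
        · exact congrArg Sum.inr ((sᶜ.orderEmbOfFin hsc).injective h)
      · have := Finset.card_add_card_compl s
        simp only [Fintype.card_sum, Fintype.card_fin, hs, hsc] at this ⊢
        omega)

@[simp] lemma sumEquivOfCompl_inl {n p q : ℕ} (s : Finset (Fin n)) (hs : s.card = p)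
    (hsc : sᶜ.card = q) (a : Fin p) :
    sumEquivOfCompl s hs hsc (Sum.inl a) = s.orderEmbOfFin hs a := rfl

@[simp] lemma sumEquivOfCompl_inr {n p q : ℕ} (s : Finset (Fin n)) (hs : s.card = p)
    (hsc : sᶜ.card = q) (b : Fin q) :
    sumEquivOfCompl s hs hsc (Sum.inr b) = sᶜ.orderEmbOfFin hsc b := rfl

lemma orderEmbOfFin_congr {α : Type*} [LinearOrder α] {s t : Finset α} {k : ℕ} (h : s = t)
    (hs : s.card = k) (ht : t.card = k) :
    (fun i => s.orderEmbOfFin hs i) = (fun i => t.orderEmbOfFin ht i) := by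
  subst h; rfl

lemma image_orderEmbOfFin {n k : ℕ} (s : Finset (Fin n)) (hs : s.card = k) :
    Finset.univ.image (fun i => s.orderEmbOfFin hs i) = s := by
  ext x
  simp only [Finset.mem_image, Finset.mem_univ, true_and]
  constructor
  · rintro ⟨i, rfl⟩
    exact Finset.orderEmbOfFin_mem s hs i
  · intro hx
    have : x ∈ Set.range (s.orderEmbOfFin hs) := by
      rw [Finset.range_orderEmbOfFin]; exact hx
    obtain ⟨i, hi⟩ := this
    exact ⟨i, hi⟩

end Layer4
end MinIdxAux


namespace MinIdxAux

section Layer5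
variable {F : Type*} [Field F] {m ρ : ℕ}

lemma entry_degree_le_colDegNat (P : Matrix (Fin m) (Fin ρ) F[X]) (i : Fin m) (j : Fin ρ) :
    (P i j).degree ≤ ((colDegNat P j : ℕ) : WithBot ℕ) := by
  have h1 : (P i j).natDegree ≤ colDegNat P j := by
    exact Finset.le_sup (f := fun i => (P i j).natDegree) (Finset.mem_univ i)
  exact le_trans Polynomial.degree_le_natDegree (Nat.cast_le.mpr h1)

lemma minor_degree_le (P : Matrix (Fin m) (Fin ρ) F[X]) (f : Fin ρ → Fin m) :
    ((P.submatrix f id).det).degree ≤ ((∑ j, colDegNat P j : ℕ) : WithBot ℕ) :=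
  degree_det_le_sum _ _ (fun i j => entry_degree_le_colDegNat P (f i) j)

lemma rho_le_of_rank {P : Matrix (Fin m) (Fin ρ) F[X]} (hP : IsMinimalBasis P) : ρ ≤ m := by
  obtain ⟨s₀⟩ : Nonempty (AlgebraicClosure F) := inferInstance
  have h2 := Matrix.rank_le_card_height (P.map fun p => (aeval s₀) p)
  rw [hP.1 s₀] at h2
  simpa using h2

lemma exists_good_minor {P : Matrix (Fin m) (Fin ρ) F[X]} (hP : IsMinimalBasis P) :
    ∃ (s : Finset (Fin m)) (hs : s.card = ρ),
      ((P.submatrix (fun i => s.orderEmbOfFin hs i) id).det).degree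
        = ((∑ j, colDegNat P j : ℕ) : WithBot ℕ) := by
  have hρ := rho_le_of_rank hP
  have hrk : (highCoeffMatrix P).rank = ρ := by
    have h := hP.2
    unfold IsColumnReduced at h
    rwa [min_eq_right hρ] at h
  obtain ⟨s, hs, hdet⟩ := exists_finset_det_ne_zero (M := highCoeffMatrix P) hrk
  refine ⟨s, hs, ?_⟩
  have hcoeff : ((P.submatrix (fun i => s.orderEmbOfFin hs i) id).det).coeff
        (∑ j, colDegNat P j)
      = ((highCoeffMatrix P).submatrix (fun i => s.orderEmbOfFin hs i) id).det := by
    rw [coeff_det_sum (P.submatrix (fun i => s.orderEmbOfFin hs i) id)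
      (fun j => colDegNat P j) (fun i j => entry_degree_le_colDegNat P _ j)]
    rfl
  exact le_antisymm (minor_degree_le P _)
    (Polynomial.le_degree_of_ne_zero (by rw [hcoeff]; exact hdet))

lemma good_minor_ne_zero {P : Matrix (Fin m) (Fin ρ) F[X]} {s : Finset (Fin m)}
    {hs : s.card = ρ} {D : ℕ}
    (h : ((P.submatrix (fun i => s.orderEmbOfFin hs i) id).det).degree = ((D : ℕ) : WithBot ℕ)) :
    (P.submatrix (fun i => s.orderEmbOfFin hs i) id).det ≠ 0 := by
  intro h0
  rw [h0] at h
  simp at h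

lemma isUnit_of_dvd_minors {P : Matrix (Fin m) (Fin ρ) F[X]} (hP : IsMinimalBasis P) {b : F[X]}
    (hb : ∀ (s : Finset (Fin m)) (hs : s.card = ρ),
      b ∣ (P.submatrix (fun i => s.orderEmbOfFin hs i) id).det) : IsUnit b := by
  apply isUnit_of_forall_aeval_ne_zero
  intro s₀
  obtain ⟨s, hs, hdet⟩ := exists_finset_det_ne_zero (M := P.map fun p => (aeval s₀) p) (hP.1 s₀)
  obtain ⟨t, ht⟩ := hb s hs
  intro hzero
  apply hdet
  have h1 : (P.map fun p => (aeval s₀) p).submatrix (fun i => s.orderEmbOfFin hs i) id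
      = (P.submatrix (fun i => s.orderEmbOfFin hs i) id).map fun p => (aeval s₀) p :=
    Matrix.submatrix_map _ _ _ _
  rw [h1]
  have hdet2 : ((P.submatrix (fun i => s.orderEmbOfFin hs i) id).map fun p => (aeval s₀) p).det
      = (aeval s₀) ((P.submatrix (fun i => s.orderEmbOfFin hs i) id).det) := by
    have := RingHom.map_det
      (((aeval s₀ : F[X] →ₐ[F] AlgebraicClosure F) : F[X] →+* AlgebraicClosure F))
      (P.submatrix (fun i => s.orderEmbOfFin hs i) id)
    exact this.symm
  rw [hdet2, ht, _root_.map_mul, hzero, zero_mul]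

lemma det_ratMap_submatrix {q : ℕ} (P : Matrix (Fin m) (Fin ρ) F[X]) (f : Fin q → Fin m)
    (g : Fin q → Fin ρ) :
    ((ratMap P).submatrix f g).det
      = algebraMap F[X] (RatFunc F) ((P.submatrix f g).det) := by
  have h1 : (ratMap P).submatrix f g = (P.submatrix f g).map (algebraMap F[X] (RatFunc F)) :=
    Matrix.submatrix_map _ _ _ _
  rw [h1]
  exact (RingHom.map_det (algebraMap F[X] (RatFunc F)) _).symm

lemma ratMap_rank {P : Matrix (Fin m) (Fin ρ) F[X]} (hP : IsMinimalBasis P) :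
    (ratMap P).rank = ρ := by
  obtain ⟨s, hs, hdeg⟩ := exists_good_minor hP
  apply rank_eq_of_det_submatrix_ne_zero (f := fun i => s.orderEmbOfFin hs i)
  rw [det_ratMap_submatrix]
  intro h
  exact good_minor_ne_zero hdeg (by exact (RatFunc.algebraMap_injective F) (by rwa [map_zero]))

end Layer5
end MinIdxAux


namespace MinIdxAux

section Layer6
variable {F : Type*} [Field F]

lemma exists_completion {m ρ : ℕ} (hρ : ρ ≤ m) (P : Matrix (Fin m) (Fin ρ) F[X])
    (hrk : ∀ s₀ : AlgebraicClosure F, (P.map fun p => (aeval s₀) p).rank = ρ) :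
    ∃ (e : (Fin ρ ⊕ Fin (m - ρ)) ≃ Fin m) (Mh : Matrix (Fin m) (Fin m) F[X]),
      IsUnit Mh.det ∧ ∀ i a, Mh i (e (Sum.inl a)) = P i a := by
  classical
  set S : Submodule F[X] (Fin m → F[X]) := LinearMap.range P.mulVecLin with hS
  obtain ⟨n', bM, bN, femb, aa, hsnf⟩ := Submodule.smithNormalForm (Pi.basisFun F[X] (Fin m)) S
  -- columns of P lie in S
  have hcol : ∀ j, Pᵀ j ∈ S := by
    intro j
    refine ⟨Pi.single j 1, ?_⟩
    funext i
    simp [Matrix.mulVecLin_apply, Matrix.mulVec_single, Matrix.transpose_apply]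
  -- the basis representation of any element of S is supported on the range of femb
  have hsupp : ∀ (x : Fin m → F[X]), x ∈ S → ∀ l, (∀ i, femb i ≠ l) → bM.repr x l = 0 := by
    intro x hx l hl
    obtain ⟨c, hc⟩ : ∃ c : Fin n' → F[X], x = ∑ i, (c i * aa i) • bM (femb i) := by
      refine ⟨fun i => bN.repr ⟨x, hx⟩ i, ?_⟩
      have h1 := Module.Basis.sum_repr bN ⟨x, hx⟩
      have h2 := congrArg (Submodule.subtype S) h1
      simp only [map_sum, Submodule.subtype_apply, SetLike.val_smul] at h2
      refine h2.symm.trans ?_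
      exact Finset.sum_congr rfl fun i _ => by rw [hsnf i, smul_smul]
    have hrepr : bM.repr x = ∑ i, (c i * aa i) • bM.repr (bM (femb i)) := by
      rw [hc, map_sum]
      simp only [_root_.map_smul]
    rw [hrepr]
    simp only [Module.Basis.repr_self, Finsupp.coe_finset_sum, Finset.sum_apply, Finsupp.coe_smul,
      Pi.smul_apply, Finsupp.single_apply]
    apply Finset.sum_eq_zero
    intro i _
    rw [if_neg (hl i)]
    simp
  -- matrices B and C
  set B : Matrix (Fin m) (Fin m) F[X] := Matrix.of fun i l => bM l i with hB
  set C : Matrix (Fin m) (Fin ρ) F[X] := Matrix.of fun l j => bM.repr (Pᵀ j) l with hC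
  have hPBC : ∀ i j, P i j = ∑ l, B i l * C l j := by
    intro i j
    have h1 := Module.Basis.sum_repr bM (Pᵀ j)
    have h2 := congrFun h1 i
    simp only [Finset.sum_apply, Pi.smul_apply, smul_eq_mul] at h2
    calc P i j = Pᵀ j i := rfl
      _ = ∑ x, (bM.repr (Pᵀ j)) x * bM x i := h2.symm
      _ = ∑ l, B i l * C l j := Finset.sum_congr rfl fun l _ => by rw [mul_comm]; rfl
  -- the support finset
  set sF : Finset (Fin m) := Finset.univ.image femb with hsF'
  have hsF : sF.card = n' := by
    rw [hsF', Finset.card_image_of_injective _ femb.injective, Finset.card_univ, Fintype.card_fin]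
  have hCsupp : ∀ l, l ∉ sF → ∀ j, C l j = 0 := by
    intro l hl j
    apply hsupp _ (hcol j)
    intro i hi
    exact hl (by rw [hsF']; exact Finset.mem_image.mpr ⟨i, Finset.mem_univ i, hi⟩)
  -- factorization with monotone enumeration of sF
  have hPfact : P = (B.submatrix id (fun t => sF.orderEmbOfFin hsF t))
      * (C.submatrix (fun t => sF.orderEmbOfFin hsF t) id) := by
    refine Matrix.ext fun i j => ?_
    rw [Matrix.mul_apply]
    have h1 : ∀ t : Fin n', (B.submatrix id (fun t => sF.orderEmbOfFin hsF t)) i t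
        * (C.submatrix (fun t => sF.orderEmbOfFin hsF t) id) t j
        = B i (sF.orderEmbOfFin hsF t) * C (sF.orderEmbOfFin hsF t) j := fun t => rfl
    rw [Finset.sum_congr rfl (fun t _ => h1 t)]
    have h2 := Finset.sum_image (s := Finset.univ)
      (g := fun t => sF.orderEmbOfFin hsF t) (f := fun l => B i l * C l j)
      (fun x _ y _ h => (sF.orderEmbOfFin hsF).injective h)
    rw [image_orderEmbOfFin sF hsF] at h2
    rw [← h2, hPBC i j]
    symm
    apply Finset.sum_subset (Finset.subset_univ sF)
    intro l _ hl
    rw [hCsupp l hl j, mul_zero]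
  -- rank lower bound : ρ ≤ rank of (C.submatrix emb id) at every point
  have hrankle : ∀ s₀ : AlgebraicClosure F,
      ρ ≤ ((C.submatrix (fun t => sF.orderEmbOfFin hsF t) id).map fun p => (aeval s₀) p).rank := by
    intro s₀
    have hmapmul : (P.map fun p => (aeval s₀) p)
        = ((B.submatrix id (fun t => sF.orderEmbOfFin hsF t)).map fun p => (aeval s₀) p)
          * ((C.submatrix (fun t => sF.orderEmbOfFin hsF t) id).map fun p => (aeval s₀) p) := by
      rw [hPfact]
      exact Matrix.map_mul (f := ((aeval s₀ : F[X] →ₐ[F] AlgebraicClosure F) : F[X] →+* AlgebraicClosure F))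
    have := Matrix.rank_mul_le_right
      ((B.submatrix id (fun t => sF.orderEmbOfFin hsF t)).map fun p => (aeval s₀) p)
      ((C.submatrix (fun t => sF.orderEmbOfFin hsF t) id).map fun p => (aeval s₀) p)
    rw [← hmapmul, hrk s₀] at this
    exact this
  -- n' = ρ
  have hρn' : ρ ≤ n' := by
    obtain ⟨s₀⟩ : Nonempty (AlgebraicClosure F) := inferInstance
    have h2 := Matrix.rank_le_card_height
      ((C.submatrix (fun t => sF.orderEmbOfFin hsF t) id).map fun p => (aeval s₀) p)
    have := hrankle s₀
    simp only [Fintype.card_fin] at h2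
    omega
  have hn'ρ : n' ≤ ρ := by
    have h1 : Module.finrank F[X] S = n' := by
      simpa using Module.finrank_eq_card_basis bN
    have h2 : Module.finrank F[X] S ≤ ρ := by
      rw [hS, Matrix.range_mulVecLin]
      refine le_trans (finrank_span_le_card _) ?_
      refine le_trans (le_of_eq (congrArg Finset.card (Set.toFinset_range P.col))) ?_
      refine le_trans Finset.card_image_le (by simp)
    omega
  have hn' : ρ = n' := le_antisymm hρn' hn'ρ
  subst hn'
  -- det of C' is a unit
  set C' : Matrix (Fin ρ) (Fin ρ) F[X] := C.submatrix (fun t => sF.orderEmbOfFin hsF t) id with hC'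
  have hC'unit : IsUnit C'.det := by
    apply isUnit_of_forall_aeval_ne_zero
    intro s₀ h0
    set MC : Matrix (Fin ρ) (Fin ρ) (AlgebraicClosure F) := C'.map fun p => (aeval s₀) p with hMC
    have hd0 : MC.det = 0 := by
      have h := RingHom.map_det
        (((aeval s₀ : F[X] →ₐ[F] AlgebraicClosure F) : F[X] →+* AlgebraicClosure F)) C'
      rw [hMC]
      calc (C'.map fun p => (aeval s₀) p).det = (aeval s₀) C'.det := h.symm
        _ = 0 := h0
    obtain ⟨v, hv0, hv⟩ := Matrix.exists_mulVec_eq_zero_iff.mpr hd0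
    have hker : LinearMap.ker MC.mulVecLin ≠ ⊥ := by
      intro hbot
      apply hv0
      have : v ∈ LinearMap.ker MC.mulVecLin := by
        rw [LinearMap.mem_ker]
        exact hv
      rw [hbot] at this
      simpa using this
    have h4 := LinearMap.finrank_range_add_finrank_ker MC.mulVecLin
    have h5 : Module.finrank (AlgebraicClosure F) (LinearMap.ker MC.mulVecLin) ≠ 0 := by
      rwa [ne_eq, Submodule.finrank_eq_zero]
    have h6 : Module.finrank (AlgebraicClosure F) (Fin ρ → AlgebraicClosure F) = ρ := by
      simp
    have h7 : MC.rank < ρ := by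
      rw [Matrix.rank]
      omega
    have := hrankle s₀
    rw [← hMC] at this
    omega
  -- the complement
  have hscc : sFᶜ.card = m - ρ := by
    rw [Finset.card_compl, hsF]
    simp
  set e : (Fin ρ ⊕ Fin (m - ρ)) ≃ Fin m := sumEquivOfCompl sF hsF hscc with he
  set Mh : Matrix (Fin m) (Fin m) F[X] := Matrix.of fun i j =>
    Sum.elim (fun a => P i a) (fun b => B i (e (Sum.inr b))) (e.symm j) with hMh
  have hMcol : ∀ i a, Mh i (e (Sum.inl a)) = P i a := by
    intro i a
    rw [hMh]
    simp
  refine ⟨e, Mh, ?_, hMcol⟩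
  -- Mh = B * Chat
  set Chat : Matrix (Fin m) (Fin m) F[X] := Matrix.of fun l j =>
    Sum.elim (fun a => C l a) (fun b => if l = e (Sum.inr b) then (1:F[X]) else 0) (e.symm j)
    with hChat
  have hfact2 : Mh = B * Chat := by
    ext i j
    rw [Matrix.mul_apply, hMh, hChat]
    simp only [Matrix.of_apply]
    rcases hx : e.symm j with x | x
    · simp only [Sum.elim_inl]
      rw [hPBC i x]
    · simp only [Sum.elim_inr]
      rw [Finset.sum_congr rfl (fun l _ => by rw [mul_ite, mul_one, mul_zero])]
      rw [Finset.sum_ite_eq' Finset.univ (e (Sum.inr x)) (fun l => B i l)]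
      simp
  have hBunit : IsUnit B.det := by
    have h1 : B = (Pi.basisFun F[X] (Fin m)).toMatrix ⇑bM := by
      ext i l
      rw [Module.Basis.toMatrix_apply]
      simp [hB]
    have h2 := Module.Basis.toMatrix_mul_toMatrix_flip (Pi.basisFun F[X] (Fin m)) bM
    apply IsUnit.of_mul_eq_one ((bM.toMatrix ⇑(Pi.basisFun F[X] (Fin m))).det)
    rw [← Matrix.det_mul, h1, h2, Matrix.det_one]
  obtain ⟨u₁, hu₁⟩ := det_cols_units e e C
  have hChatdet : Chat.det = (u₁ : F[X]) * C'.det := by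
    rw [hChat, hC']
    exact hu₁
  rw [hfact2, Matrix.det_mul, hChatdet]
  exact hBunit.mul ((u₁.isUnit).mul hC'unit)

end Layer6
end MinIdxAux


namespace MinIdxAux

section Layer7
variable {F : Type*} [Field F]

lemma jacobi {m ρ : ℕ} (P : Matrix (Fin m) (Fin ρ) F[X])
    (e : (Fin ρ ⊕ Fin (m - ρ)) ≃ Fin m) (Mh : Matrix (Fin m) (Fin m) F[X])
    (hMdet : IsUnit Mh.det) (hMcol : ∀ i a, Mh i (e (Sum.inl a)) = P i a) :
    ∃ Y : Matrix (Fin (m - ρ)) (Fin m) F[X],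
      Y * P = 0 ∧
      ∀ (s : Finset (Fin m)) (hs : s.card = ρ) (hsc : sᶜ.card = m - ρ),
        ∃ u : F[X]ˣ, ((Yᵀ).submatrix (fun b => sᶜ.orderEmbOfFin hsc b) id).det
          = (u : F[X]) * (P.submatrix (fun a => s.orderEmbOfFin hs a) id).det := by
  classical
  letI := Mh.invertibleOfIsUnitDet hMdet
  set W : Matrix (Fin m) (Fin m) F[X] := ⅟Mh with hW
  have hWM : W * Mh = 1 := invOf_mul_self Mh
  have hWdetUnit : IsUnit W.det :=
    IsUnit.of_mul_eq_one _ (by rw [← Matrix.det_mul, hWM, Matrix.det_one])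
  refine ⟨Matrix.of fun b l => W (e (Sum.inr b)) l, ?_, ?_⟩
  · refine Matrix.ext fun b a => ?_
    have h1 : (W * Mh) (e (Sum.inr b)) (e (Sum.inl a)) = 0 := by
      rw [hWM]
      exact Matrix.one_apply_ne (fun h => by simpa using e.injective h)
    rw [Matrix.zero_apply, ← h1, Matrix.mul_apply, Matrix.mul_apply]
    exact Finset.sum_congr rfl fun l _ => by rw [hMcol l a]; rfl
  · intro s hs hsc
    set eJ : (Fin ρ ⊕ Fin (m - ρ)) ≃ Fin m := sumEquivOfCompl s hs hsc with heJ
    set Z : Matrix (Fin m) (Fin m) F[X] := Matrix.of fun i j => Sum.elim (fun a => P i a)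
      (fun b => if i = eJ (Sum.inr b) then (1:F[X]) else 0) (e.symm j) with hZ
    obtain ⟨u₁, hu₁⟩ := det_cols_units e eJ P
    -- blocks of (W * Z) reindexed by e
    have hVblocks : (W * Z).submatrix e e = Matrix.fromBlocks 1
        (Matrix.of fun a b => W (e (Sum.inl a)) (eJ (Sum.inr b))) 0
        (Matrix.of fun b' b => W (e (Sum.inr b')) (eJ (Sum.inr b))) := by
      refine Matrix.ext fun x y => ?_
      have hcolZ : ∀ l (a : Fin ρ), Z l (e (Sum.inl a)) = Mh l (e (Sum.inl a)) := by
        intro l a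
        rw [hZ, hMcol]
        simp
      have hcolZ' : ∀ l (b : Fin (m - ρ)),
          Z l (e (Sum.inr b)) = if l = eJ (Sum.inr b) then 1 else 0 := by
        intro l b
        rw [hZ]
        simp
      rcases x with x | x <;> rcases y with y | y
      · have : (W * Z) (e (Sum.inl x)) (e (Sum.inl y)) = (W * Mh) (e (Sum.inl x)) (e (Sum.inl y)) := by
          rw [Matrix.mul_apply, Matrix.mul_apply]
          exact Finset.sum_congr rfl fun l _ => by rw [hcolZ l y]
        rw [Matrix.submatrix_apply, this, hWM]
        simp [Matrix.one_apply, Matrix.fromBlocks, e.injective.eq_iff]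
      · rw [Matrix.submatrix_apply, Matrix.mul_apply]
        rw [Finset.sum_congr rfl (fun l _ => by rw [hcolZ' l y, mul_ite, mul_one, mul_zero])]
        rw [Finset.sum_ite_eq' Finset.univ (eJ (Sum.inr y)) (fun l => W (e (Sum.inl x)) l)]
        simp [Matrix.fromBlocks]
      · have : (W * Z) (e (Sum.inr x)) (e (Sum.inl y)) = (W * Mh) (e (Sum.inr x)) (e (Sum.inl y)) := by
          rw [Matrix.mul_apply, Matrix.mul_apply]
          exact Finset.sum_congr rfl fun l _ => by rw [hcolZ l y]
        rw [Matrix.submatrix_apply, this, hWM]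
        have : e (Sum.inr x) ≠ e (Sum.inl y) := fun h => by simpa using e.injective h
        simp [Matrix.one_apply, this, Matrix.fromBlocks]
      · rw [Matrix.submatrix_apply, Matrix.mul_apply]
        rw [Finset.sum_congr rfl (fun l _ => by rw [hcolZ' l y, mul_ite, mul_one, mul_zero])]
        rw [Finset.sum_ite_eq' Finset.univ (eJ (Sum.inr y)) (fun l => W (e (Sum.inr x)) l)]
        simp [Matrix.fromBlocks]
    have hdetV : (W * Z).det
        = (Matrix.of fun b' b => W (e (Sum.inr b')) (eJ (Sum.inr b)) :
            Matrix (Fin (m-ρ)) (Fin (m-ρ)) F[X]).det := by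
      rw [← Matrix.det_submatrix_equiv_self e (W * Z), hVblocks,
        Matrix.det_fromBlocks_zero₂₁, Matrix.det_one, one_mul]
    -- identify with the Y-minor
    have hYtsub : ((Matrix.of fun b l => W (e (Sum.inr b)) l :
          Matrix (Fin (m-ρ)) (Fin m) F[X])ᵀ).submatrix (fun b => sᶜ.orderEmbOfFin hsc b) id
        = (Matrix.of fun b' b => W (e (Sum.inr b')) (eJ (Sum.inr b)) :
            Matrix (Fin (m-ρ)) (Fin (m-ρ)) F[X])ᵀ := by
      refine Matrix.ext fun x y => ?_
      simp [Matrix.submatrix_apply, Matrix.transpose_apply, heJ]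
    obtain ⟨uW, huW⟩ := hWdetUnit
    refine ⟨uW * u₁, ?_⟩
    rw [← hZ] at hu₁
    have hu₁' : Z.det = (u₁ : F[X]) * (P.submatrix (fun a => s.orderEmbOfFin hs a) id).det := hu₁
    rw [hYtsub, Matrix.det_transpose, ← hdetV, Matrix.det_mul, hu₁', ← huW]
    push_cast
    ring
end Layer7
end MinIdxAux


namespace MinIdxAux

section Layer8
variable {F : Type*} [Field F]

lemma submatrix_mul_id {a b c d : ℕ} (A : Matrix (Fin a) (Fin b) (RatFunc F))
    (B : Matrix (Fin b) (Fin c) (RatFunc F)) (f : Fin d → Fin a) :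
    (A * B).submatrix f id = (A.submatrix f id) * B := by
  refine Matrix.ext fun i j => ?_
  simp [Matrix.mul_apply]

lemma exists_factor {p q mm : ℕ} (A : Matrix (Fin mm) (Fin p) (RatFunc F))
    (B : Matrix (Fin mm) (Fin q) (RatFunc F)) (h : colSpace B ≤ colSpace A) :
    ∃ T : Matrix (Fin p) (Fin q) (RatFunc F), B = A * T := by
  have hcols : ∀ j, ∃ t, A.mulVec t = Bᵀ j := by
    intro j
    have hmem : Bᵀ j ∈ colSpace A := by
      refine h ⟨Pi.single j 1, ?_⟩
      funext i
      simp [Matrix.mulVecLin_apply, Matrix.mulVec_single, Matrix.transpose_apply]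
    obtain ⟨v, hv⟩ := hmem
    exact ⟨v, hv⟩
  choose t ht using hcols
  refine ⟨Matrix.of fun i j => t j i, ?_⟩
  refine Matrix.ext fun i j => ?_
  rw [Matrix.mul_apply]
  have h2 := congrFun (ht j) i
  simp only [Matrix.mulVec, dotProduct] at h2
  calc B i j = Bᵀ j i := rfl
    _ = ∑ x, A i x * t j x := h2.symm
    _ = ∑ x, A i x * (Matrix.of fun i j => t j i) x j := rfl

theorem core {m ρ : ℕ} (K : Matrix (Fin m) (Fin ρ) F[X])
    (N : Matrix (Fin m) (Fin (m - ρ)) F[X])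
    (hK : IsMinimalBasis K) (hN : IsMinimalBasis N)
    (hker : colSpace (ratMap N) = LinearMap.ker ((ratMap K)ᵀ).mulVecLin) :
    (∑ j, colDegNat N j) = (∑ j, colDegNat K j) := by
  classical
  have hρ : ρ ≤ m := rho_le_of_rank hK
  obtain ⟨e, Mh, hMdet, hMcol⟩ := exists_completion hρ K hK.1
  obtain ⟨Y, hYK, hYmin⟩ := jacobi K e Mh hMdet hMcol
  obtain ⟨sK, hsK, hdegK⟩ := exists_good_minor hK
  obtain ⟨tN, htN, hdegN⟩ := exists_good_minor hN
  have hcc : ∀ s : Finset (Fin m), s.card = ρ → sᶜ.card = m - ρ := by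
    intro s hs; rw [Finset.card_compl, hs]; simp
  have hcc' : ∀ t : Finset (Fin m), t.card = m - ρ → tᶜ.card = ρ := by
    intro t ht; rw [Finset.card_compl, ht]; simp only [Fintype.card_fin]; omega
  have hYminor : ∀ (t : Finset (Fin m)) (ht : t.card = m - ρ),
      ∃ u : F[X]ˣ, ((Yᵀ).submatrix (fun b => t.orderEmbOfFin ht b) id).det
        = (u : F[X]) * (K.submatrix (fun a => tᶜ.orderEmbOfFin (hcc' t ht) a) id).det := by
    intro t ht
    have h1 : tᶜᶜ = t := compl_compl t
    have hsc : tᶜᶜ.card = m - ρ := by rw [h1]; exact ht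
    obtain ⟨u, hu⟩ := hYmin tᶜ (hcc' t ht) hsc
    refine ⟨u, ?_⟩
    calc ((Yᵀ).submatrix (fun b => t.orderEmbOfFin ht b) id).det
        = ((Yᵀ).submatrix (fun b => tᶜᶜ.orderEmbOfFin hsc b) id).det := by
          rw [orderEmbOfFin_congr h1 hsc ht]
      _ = (u : F[X]) * (K.submatrix (fun a => tᶜ.orderEmbOfFin (hcc' t ht) a) id).det := hu
  have hKm : (K.submatrix (fun i => sK.orderEmbOfFin hsK i) id).det ≠ 0 :=
    good_minor_ne_zero hdegK
  have hNm : (N.submatrix (fun i => tN.orderEmbOfFin htN i) id).det ≠ 0 :=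
    good_minor_ne_zero hdegN
  have hYrank : (ratMap Yᵀ).rank = m - ρ := by
    obtain ⟨u, hu⟩ := hYminor sKᶜ (hcc sK hsK)
    apply rank_eq_of_det_submatrix_ne_zero (f := fun b => sKᶜ.orderEmbOfFin (hcc sK hsK) b)
    rw [det_ratMap_submatrix]
    intro h
    have h2 := (RatFunc.algebraMap_injective F) (h.trans (map_zero _).symm)
    rw [hu] at h2
    have h3 : (K.submatrix (fun a => sKᶜᶜ.orderEmbOfFin (hcc' sKᶜ (hcc sK hsK)) a) id).det = 0 := by
      have := u.isUnit
      exact (mul_eq_zero.mp h2).resolve_left (fun hz => by simp [hz] at this)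
    rw [orderEmbOfFin_congr (compl_compl sK) (hcc' sKᶜ (hcc sK hsK)) hsK] at h3
    exact hKm h3
  have hsub : colSpace (ratMap Yᵀ) ≤ LinearMap.ker ((ratMap K)ᵀ).mulVecLin := by
    rintro x ⟨v, rfl⟩
    rw [LinearMap.mem_ker]
    have h0 : (ratMap K)ᵀ * (ratMap Yᵀ) = 0 := by
      have h1 : Kᵀ * Yᵀ = (0 : Matrix (Fin ρ) (Fin (m - ρ)) F[X]) := by
        rw [← Matrix.transpose_mul, hYK, Matrix.transpose_zero]
      have h2 : (ratMap K)ᵀ = ratMap (Kᵀ) := by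
        unfold ratMap
        rw [Matrix.transpose_map]
      rw [h2]
      unfold ratMap
      rw [← Matrix.map_mul (f := algebraMap F[X] (RatFunc F)), h1]
      ext i j
      simp
    calc ((ratMap K)ᵀ).mulVecLin ((ratMap Yᵀ).mulVecLin v)
        = (((ratMap K)ᵀ) * (ratMap Yᵀ)).mulVecLin v := by
          rw [Matrix.mulVecLin_mul]; rfl
      _ = 0 := by rw [h0]; simp
  have hkerfin : Module.finrank (RatFunc F) (LinearMap.ker ((ratMap K)ᵀ).mulVecLin) = m - ρ := by
    have hKtrank : ((ratMap K)ᵀ).rank = ρ := by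
      rw [Matrix.rank_transpose]; exact ratMap_rank hK
    have hfr := LinearMap.finrank_range_add_finrank_ker ((ratMap K)ᵀ).mulVecLin
    have h9 : Module.finrank (RatFunc F) (Fin m → RatFunc F) = m := by simp
    rw [h9] at hfr
    have h10 : Module.finrank (RatFunc F)
        (LinearMap.range ((ratMap K)ᵀ).mulVecLin) = ρ := hKtrank
    omega
  have hkerY : colSpace (ratMap Yᵀ) = LinearMap.ker ((ratMap K)ᵀ).mulVecLin :=
    Submodule.eq_of_le_of_finrank_eq hsub (by rw [hkerfin]; exact hYrank)
  obtain ⟨T, hT⟩ := exists_factor (ratMap Yᵀ) (ratMap N) (le_of_eq (hker.trans hkerY.symm))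
  have key : ∀ (t : Finset (Fin m)) (ht : t.card = m - ρ),
      algebraMap F[X] (RatFunc F) ((N.submatrix (fun b => t.orderEmbOfFin ht b) id).det)
        = algebraMap F[X] (RatFunc F) ((Yᵀ.submatrix (fun b => t.orderEmbOfFin ht b) id).det)
          * T.det := by
    intro t ht
    have h1 : (ratMap N).submatrix (fun b => t.orderEmbOfFin ht b) id
        = ((ratMap Yᵀ).submatrix (fun b => t.orderEmbOfFin ht b) id) * T := by
      rw [hT]
      exact submatrix_mul_id _ _ _
    have h2 := congrArg Matrix.det h1
    rw [Matrix.det_mul, det_ratMap_submatrix, det_ratMap_submatrix] at h2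
    exact h2
  set τ : RatFunc F := T.det with hτdef
  have hτne : τ ≠ 0 := by
    intro h0
    have hk := key tN htN
    rw [h0, mul_zero] at hk
    exact hNm ((RatFunc.algebraMap_injective F) (hk.trans (map_zero _).symm))
  have hden : algebraMap F[X] (RatFunc F) τ.denom ≠ 0 := by
    intro h
    exact RatFunc.denom_ne_zero τ ((RatFunc.algebraMap_injective F) (h.trans (map_zero _).symm))
  have hdnum : algebraMap F[X] (RatFunc F) τ.num = τ * algebraMap F[X] (RatFunc F) τ.denom := by
    have h := RatFunc.num_div_denom τ
    exact (div_eq_iff hden).mp h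
  have hpoly : ∀ (t : Finset (Fin m)) (ht : t.card = m - ρ),
      ∃ u : F[X]ˣ,
        (N.submatrix (fun b => t.orderEmbOfFin ht b) id).det * τ.denom
          = (u : F[X]) * ((K.submatrix (fun a => tᶜ.orderEmbOfFin (hcc' t ht) a) id).det
              * τ.num) := by
    intro t ht
    obtain ⟨u, hu⟩ := hYminor t ht
    refine ⟨u, RatFunc.algebraMap_injective F ?_⟩
    rw [_root_.map_mul, _root_.map_mul, _root_.map_mul]
    calc algebraMap F[X] (RatFunc F) ((N.submatrix (fun b => t.orderEmbOfFin ht b) id).det)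
          * algebraMap F[X] (RatFunc F) τ.denom
        = (algebraMap F[X] (RatFunc F) ((Yᵀ.submatrix (fun b => t.orderEmbOfFin ht b) id).det)
            * τ) * algebraMap F[X] (RatFunc F) τ.denom := by rw [← key t ht]
      _ = algebraMap F[X] (RatFunc F) ((Yᵀ.submatrix (fun b => t.orderEmbOfFin ht b) id).det)
            * (τ * algebraMap F[X] (RatFunc F) τ.denom) := by ring
      _ = algebraMap F[X] (RatFunc F) ((Yᵀ.submatrix (fun b => t.orderEmbOfFin ht b) id).det)
            * algebraMap F[X] (RatFunc F) τ.num := by rw [← hdnum]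
      _ = _ := by rw [hu, _root_.map_mul]; ring
  have hdenomUnit : IsUnit τ.denom := by
    apply isUnit_of_dvd_minors hK
    intro s hs
    obtain ⟨u, hu⟩ := hpoly sᶜ (hcc s hs)
    rw [orderEmbOfFin_congr (compl_compl s) (hcc' sᶜ (hcc s hs)) hs] at hu
    have h1 : τ.denom ∣ (K.submatrix (fun a => s.orderEmbOfFin hs a) id).det * τ.num := by
      refine ⟨((u⁻¹ : F[X]ˣ) : F[X]) * (N.submatrix
        (fun b => sᶜ.orderEmbOfFin (hcc s hs) b) id).det, ?_⟩
      have h2 := congrArg (fun z => ((u⁻¹ : F[X]ˣ) : F[X]) * z) hu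
      rw [← mul_assoc, ← mul_assoc] at h2
      rw [Units.inv_mul, one_mul] at h2
      rw [← h2]
      ring
    exact ((RatFunc.isCoprime_num_denom τ).symm).dvd_of_dvd_mul_right h1
  have hnumUnit : IsUnit τ.num := by
    apply isUnit_of_dvd_minors hN
    intro t ht
    obtain ⟨u, hu⟩ := hpoly t ht
    have h1 : τ.num ∣ (N.submatrix (fun b => t.orderEmbOfFin ht b) id).det * τ.denom := by
      refine ⟨(u : F[X]) * (K.submatrix (fun a => tᶜ.orderEmbOfFin (hcc' t ht) a) id).det, ?_⟩
      rw [hu]; ring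
    exact (RatFunc.isCoprime_num_denom τ).dvd_of_dvd_mul_right h1
  have hdeg_eq : ∀ (t : Finset (Fin m)) (ht : t.card = m - ρ),
      ((N.submatrix (fun b => t.orderEmbOfFin ht b) id).det).degree
        = ((K.submatrix (fun a => tᶜ.orderEmbOfFin (hcc' t ht) a) id).det).degree := by
    intro t ht
    obtain ⟨u, hu⟩ := hpoly t ht
    have h1 := congrArg Polynomial.degree hu
    rw [Polynomial.degree_mul, Polynomial.degree_mul, Polynomial.degree_mul] at h1
    rw [Polynomial.isUnit_iff_degree_eq_zero.mp hdenomUnit,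
      Polynomial.isUnit_iff_degree_eq_zero.mp hnumUnit,
      Polynomial.isUnit_iff_degree_eq_zero.mp u.isUnit] at h1
    simpa using h1
  -- conclusion
  have e1 : ((∑ j, colDegNat N j : ℕ) : WithBot ℕ) ≤ ((∑ j, colDegNat K j : ℕ) : WithBot ℕ) := by
    rw [← hdegN, hdeg_eq tN htN]
    exact minor_degree_le K _
  have h3 := hdeg_eq sKᶜ (hcc sK hsK)
  rw [orderEmbOfFin_congr (compl_compl sK) (hcc' sKᶜ (hcc sK hsK)) hsK, hdegK] at h3
  have h4 := minor_degree_le N (fun b => sKᶜ.orderEmbOfFin (hcc sK hsK) b)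
  rw [h3] at h4
  have e1' : (∑ j, colDegNat N j) ≤ (∑ j, colDegNat K j) := by exact_mod_cast e1
  have e2' : (∑ j, colDegNat K j) ≤ (∑ j, colDegNat N j) := by exact_mod_cast h4
  omega

end Layer8
end MinIdxAux


namespace MinIdxAux

section Layer9
variable {F : Type*} [Field F]

lemma ker_transpose_mono {mm n p : ℕ} (A : Matrix (Fin mm) (Fin n) (RatFunc F))
    (B : Matrix (Fin mm) (Fin p) (RatFunc F)) (h : colSpace A ≤ colSpace B) :
    LinearMap.ker Bᵀ.mulVecLin ≤ LinearMap.ker Aᵀ.mulVecLin := by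
  intro x hx
  rw [LinearMap.mem_ker] at hx ⊢
  funext j
  have hcol : Aᵀ j ∈ colSpace A := ⟨Pi.single j 1, by
    funext i
    simp [Matrix.mulVecLin_apply, Matrix.mulVec_single, Matrix.transpose_apply]⟩
  obtain ⟨u, hu⟩ := h hcol
  have key : (Aᵀ.mulVecLin x) j = 0 := by
    have h1 : (Aᵀ.mulVecLin x) j = x ⬝ᵥ (Aᵀ j) := by
      simp [Matrix.mulVecLin_apply, Matrix.mulVec, Matrix.vecMul, dotProduct,
        Matrix.transpose_apply, mul_comm]
    rw [h1, ← hu, show B.mulVecLin u = B.mulVec u from rfl, Matrix.dotProduct_mulVec,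
      ← Matrix.mulVec_transpose]
    have hx' : Bᵀ.mulVec x = 0 := hx
    rw [hx']
    simp
  rw [key]
  simp

lemma ker_transpose_eq {mm n p : ℕ} (A : Matrix (Fin mm) (Fin n) (RatFunc F))
    (B : Matrix (Fin mm) (Fin p) (RatFunc F)) (h : colSpace A = colSpace B) :
    LinearMap.ker Aᵀ.mulVecLin = LinearMap.ker Bᵀ.mulVecLin :=
  le_antisymm (ker_transpose_mono B A (le_of_eq h.symm)) (ker_transpose_mono A B (le_of_eq h))

lemma colDegNat_eq {mm ρ : ℕ} {P : Matrix (Fin mm) (Fin ρ) F[X]} {k : Fin ρ → ℕ}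
    (h : ∀ j, colDegree P j = ((k j : ℕ) : WithBot ℕ)) (j : Fin ρ) : colDegNat P j = k j := by
  have hne : (Finset.univ : Finset (Fin mm)).Nonempty := by
    by_contra hcon
    rw [Finset.not_nonempty_iff_eq_empty] at hcon
    have h2 := h j
    unfold colDegree at h2
    rw [hcon] at h2
    simp at h2
  obtain ⟨i, _, hi⟩ := Finset.exists_mem_eq_sup Finset.univ hne (fun i => (P i j).degree)
  have hdi : (P i j).degree = ((k j : ℕ) : WithBot ℕ) := by
    rw [← hi]
    exact h j
  apply le_antisymm
  · apply Finset.sup_le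
    intro l _
    rw [Polynomial.natDegree_le_iff_degree_le]
    exact le_trans (Finset.le_sup (f := fun i => (P i j).degree) (Finset.mem_univ l))
      (le_of_eq (h j))
  · have h3 : (P i j).natDegree = k j := Polynomial.natDegree_eq_of_degree_eq_some hdi
    calc k j = (P i j).natDegree := h3.symm
      _ ≤ colDegNat P j := Finset.le_sup (f := fun i => (P i j).natDegree) (Finset.mem_univ i)

end Layer9
end MinIdxAux

theorem statement2 {m n r : ℕ}
    (A : Matrix (Fin m) (Fin n) (RatFunc F)) (hrank : A.rank = r)
    (k l : Fin r → ℕ) (dd : Fin (n - r) → ℕ) (v : Fin (m - r) → ℕ)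
    (hka : Antitone k) (hla : Antitone l) (hdda : Antitone dd) (hva : Antitone v)
    (hk : HasColSpanMinIndices A k) (hl : HasRowSpanMinIndices A l)
    (hdd : HasRightMinIndices A dd) (hv : HasLeftMinIndices A v) :
    (∑ i, v i = ∑ i, k i) ∧ (∑ i, dd i = ∑ i, l i) := by
  classical
  obtain ⟨K, hKmin, hKdeg, hKcol⟩ := hk
  obtain ⟨NV, hNVmin, hNVdeg, hNVker⟩ := hv
  obtain ⟨L, hLmin, hLdeg, hLcol⟩ := hl
  obtain ⟨ND, hNDmin, hNDdeg, hNDker⟩ := hdd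
  constructor
  · have hker1 : LinearMap.ker Aᵀ.mulVecLin = LinearMap.ker ((ratMap K)ᵀ).mulVecLin :=
      MinIdxAux.ker_transpose_eq A (ratMap K) hKcol.symm
    have hcore := MinIdxAux.core K NV hKmin hNVmin (hNVker.trans hker1)
    calc ∑ i, v i = ∑ j, colDegNat NV j :=
          (Finset.sum_congr rfl fun j _ => (MinIdxAux.colDegNat_eq hNVdeg j).symm)
      _ = ∑ j, colDegNat K j := hcore
      _ = ∑ i, k i := Finset.sum_congr rfl fun j _ => MinIdxAux.colDegNat_eq hKdeg j
  · have hker2 : LinearMap.ker A.mulVecLin = LinearMap.ker ((ratMap L)ᵀ).mulVecLin := by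
      have h1 := MinIdxAux.ker_transpose_eq Aᵀ (ratMap L) hLcol.symm
      rwa [Matrix.transpose_transpose] at h1
    have hcore := MinIdxAux.core L ND hLmin hNDmin (hNDker.trans hker2)
    calc ∑ i, dd i = ∑ j, colDegNat ND j :=
          (Finset.sum_congr rfl fun j _ => (MinIdxAux.colDegNat_eq hNDdeg j).symm)
      _ = ∑ j, colDegNat L j := hcore
      _ = ∑ i, l i := Finset.sum_congr rfl fun j _ => MinIdxAux.colDegNat_eq hLdeg j

end
end

section
/- Let 𝔽 be a field and let K(s) ∈ 𝔽[s]^{m×r} be a polynomial matrix of rank r that is column reduced with column degrees k′₁, …, k′_r. Then there exists a biproper matrix B(s) ∈ 𝔽(s)^{m×m} such that K(s) = B(s) · D(s), where D(s) is the m×r rational matrix whose top r×r block is diag(s^{k′₁}, …, s^{k′_r}) and whose remaining m−r rows are zero. -/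
open Polynomial Matrix

noncomputable section

variable {F : Type*} [Field F]

private lemma st4_coeff_prod_top {ι : Type*} (s : Finset ι) (f : ι → F[X]) (d : ι → ℕ)
    (h : ∀ i ∈ s, (f i).natDegree ≤ d i) :
    (∏ i ∈ s, f i).coeff (∑ i ∈ s, d i) = ∏ i ∈ s, (f i).coeff (d i) := by
  induction s using Finset.cons_induction with
  | empty => simp
  | cons a s ha ih =>
    rw [Finset.prod_cons, Finset.sum_cons, Finset.prod_cons,
      Polynomial.coeff_mul_add_eq_of_natDegree_le (h a (Finset.mem_cons_self a s))
        ((Polynomial.natDegree_prod_le _ _).trans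
          (Finset.sum_le_sum fun i hi => h i (Finset.mem_cons_of_mem hi))),
      ih fun i hi => h i (Finset.mem_cons_of_mem hi)]

private lemma st4_det_coeff_top {m : ℕ} (P : Matrix (Fin m) (Fin m) F[X]) (d : Fin m → ℕ)
    (h : ∀ i j, (P i j).natDegree ≤ d j) :
    (P.det).coeff (∑ j, d j) = (Matrix.of fun i j => (P i j).coeff (d j)).det := by
  rw [Matrix.det_apply', Matrix.det_apply', Polynomial.finset_sum_coeff]
  refine Finset.sum_congr rfl fun σ _ => ?_
  rw [← Polynomial.C_eq_intCast, Polynomial.coeff_C_mul,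
    st4_coeff_prod_top _ _ _ (fun j _ => h (σ j) j)]
  rfl

private lemma st4_det_natDegree_le {m : ℕ} (P : Matrix (Fin m) (Fin m) F[X]) (d : Fin m → ℕ)
    (h : ∀ i j, (P i j).natDegree ≤ d j) :
    (P.det).natDegree ≤ ∑ j, d j := by
  rw [Matrix.det_apply']
  refine Polynomial.natDegree_sum_le_of_forall_le Finset.univ _ (fun σ _ => ?_)
  refine le_trans Polynomial.natDegree_mul_le ?_
  rw [Polynomial.natDegree_intCast, zero_add]
  refine le_trans (Polynomial.natDegree_prod_le Finset.univ (fun i => P (σ i) i)) ?_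
  exact Finset.sum_le_sum fun j _ => h (σ j) j

private lemma st4_natDegree_div_add {p g : F[X]} (hp : p ≠ 0) (hgp : g ∣ p) :
    g.natDegree + (p / g).natDegree = p.natDegree := by
  have hg0 : g ≠ 0 := ne_zero_of_dvd_ne_zero hp hgp
  have hmul := EuclideanDomain.mul_div_cancel' hg0 hgp
  conv_rhs => rw [← hmul]
  rw [Polynomial.natDegree_mul hg0 (by
    intro h0
    apply hp
    rw [← hmul, h0, mul_zero])]

private lemma st4_isProperRat_div (p q : F[X]) (hq : q ≠ 0) (h : p.natDegree ≤ q.natDegree) :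
    IsProperRat (algebraMap F[X] (RatFunc F) p / algebraMap F[X] (RatFunc F) q) := by
  classical
  unfold IsProperRat
  rcases eq_or_ne p 0 with rfl | hp
  · simp
  rw [RatFunc.num_div, RatFunc.denom_div p hq]
  have hgp : gcd p q ∣ p := gcd_dvd_left p q
  have hgq : gcd p q ∣ q := gcd_dvd_right p q
  have hp' : p / gcd p q ≠ 0 := by
    intro h0
    apply hp
    rw [← EuclideanDomain.mul_div_cancel' (ne_zero_of_dvd_ne_zero hp hgp) hgp, h0, mul_zero]
  have hq' : q / gcd p q ≠ 0 := by
    intro h0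
    apply hq
    rw [← EuclideanDomain.mul_div_cancel' (ne_zero_of_dvd_ne_zero hq hgq) hgq, h0, mul_zero]
  have hc : ((q / gcd p q).leadingCoeff⁻¹) ≠ 0 :=
    inv_ne_zero (Polynomial.leadingCoeff_ne_zero.2 hq')
  rw [Polynomial.degree_C_mul hc, Polynomial.degree_C_mul hc,
    Polynomial.degree_eq_natDegree hp', Polynomial.degree_eq_natDegree hq', Nat.cast_le]
  have h1 := st4_natDegree_div_add hp hgp
  have h2 := st4_natDegree_div_add hq hgq
  omega

private lemma st4_isBiproperRat_div (p q : F[X]) (hp : p ≠ 0) (hq : q ≠ 0)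
    (h : p.natDegree = q.natDegree) :
    IsBiproperRat (algebraMap F[X] (RatFunc F) p / algebraMap F[X] (RatFunc F) q) := by
  classical
  constructor
  · exact div_ne_zero ((map_ne_zero_iff _ (RatFunc.algebraMap_injective F)).2 hp)
      ((map_ne_zero_iff _ (RatFunc.algebraMap_injective F)).2 hq)
  rw [RatFunc.num_div, RatFunc.denom_div p hq]
  have hgp : gcd p q ∣ p := gcd_dvd_left p q
  have hgq : gcd p q ∣ q := gcd_dvd_right p q
  have hp' : p / gcd p q ≠ 0 := by
    intro h0
    apply hp
    rw [← EuclideanDomain.mul_div_cancel' (ne_zero_of_dvd_ne_zero hp hgp) hgp, h0, mul_zero]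
  have hq' : q / gcd p q ≠ 0 := by
    intro h0
    apply hq
    rw [← EuclideanDomain.mul_div_cancel' (ne_zero_of_dvd_ne_zero hq hgq) hgq, h0, mul_zero]
  have hc : ((q / gcd p q).leadingCoeff⁻¹) ≠ 0 :=
    inv_ne_zero (Polynomial.leadingCoeff_ne_zero.2 hq')
  rw [Polynomial.degree_C_mul hc, Polynomial.degree_C_mul hc,
    Polynomial.degree_eq_natDegree hp', Polynomial.degree_eq_natDegree hq']
  have h1 := st4_natDegree_div_add hp hgp
  have h2 := st4_natDegree_div_add hq hgq
  norm_cast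
  omega


theorem statement4 {m r : ℕ}
    (K : Matrix (Fin m) (Fin r) F[X]) (hrank : (ratMap K).rank = r)
    (hred : IsColumnReduced K)
    (k' : Fin r → ℕ) (hdeg : ∀ j, colDegree K j = (k' j : WithBot ℕ)) :
    ∃ B : Matrix (Fin m) (Fin m) (RatFunc F), IsBiproper B ∧
      ratMap K = B * Matrix.of (fun (i : Fin m) (j : Fin r) =>
        if (i : ℕ) = (j : ℕ) then (RatFunc.X : RatFunc F) ^ (k' j) else 0) := by
  classical
  have hrm : r ≤ m := by
    have h1 := Matrix.rank_le_card_height (ratMap K)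
    rw [hrank, Fintype.card_fin] at h1
    exact h1
  have hKdeg : ∀ (i : Fin m) (j : Fin r), (K i j).natDegree ≤ k' j := by
    intro i j
    refine Polynomial.natDegree_le_iff_degree_le.2 ?_
    have hdeg' : (Finset.univ.sup fun i : Fin m => (K i j).degree) = ((k' j : ℕ) : WithBot ℕ) :=
      hdeg j
    rw [← hdeg']
    exact Finset.le_sup (f := fun i : Fin m => (K i j).degree) (Finset.mem_univ i)
  have hcdn : ∀ j : Fin r, colDegNat K j = k' j := by
    intro j
    have hm0 : 0 < m := by
      have := lt_of_lt_of_le j.2 hrm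
      omega
    have hne : Nonempty (Fin m) := ⟨⟨0, hm0⟩⟩
    refine le_antisymm (Finset.sup_le fun i _ => hKdeg i j) ?_
    obtain ⟨i, -, hi⟩ := Finset.exists_mem_eq_sup Finset.univ Finset.univ_nonempty
      (fun i : Fin m => (K i j).degree)
    have hdi : (K i j).degree = ((k' j : ℕ) : WithBot ℕ) := by
      rw [← hi]
      exact hdeg j
    have hnd := Polynomial.natDegree_eq_of_degree_eq_some hdi
    show (Finset.univ.sup fun i : Fin m => (K i j).natDegree) ≥ k' j
    rw [← hnd]
    exact Finset.le_sup (f := fun i : Fin m => (K i j).natDegree) (Finset.mem_univ i)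
  have hmin : (highCoeffMatrix K).rank = r := by
    have h2 : (highCoeffMatrix K).rank = min m r := hred
    rw [h2, min_eq_right hrm]
  have hli : LinearIndependent F (highCoeffMatrix K)ᵀ := by
    change LinearIndependent F (highCoeffMatrix K).col
    rw [linearIndependent_iff_card_eq_finrank_span, Fintype.card_fin, Set.finrank,
      ← Matrix.rank_eq_finrank_span_cols, hmin]
  obtain ⟨W', hcompl⟩ :=
    Submodule.exists_isCompl (Submodule.span F (Set.range (highCoeffMatrix K)ᵀ))
  have hfW : Module.finrank F (Submodule.span F (Set.range (highCoeffMatrix K)ᵀ)) = r := by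
    change Module.finrank F (Submodule.span F (Set.range (highCoeffMatrix K).col)) = r
    rw [← Matrix.rank_eq_finrank_span_cols, hmin]
  have htot := Submodule.finrank_add_eq_of_isCompl hcompl
  rw [hfW, Module.finrank_fin_fun] at htot
  have hfW' : Module.finrank F W' = m - r := by omega
  let b' : Module.Basis (Fin (m - r)) F W' := Module.finBasisOfFinrankEq F W' hfW'
  let w : Fin r ⊕ Fin (m - r) → (Fin m → F) :=
    Sum.elim (highCoeffMatrix K)ᵀ (fun c => (b' c : Fin m → F))
  have hwli : LinearIndependent F w := by
    refine LinearIndependent.sum_type hli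
      (b'.linearIndependent.map' W'.subtype (Submodule.ker_subtype W')) ?_
    refine Disjoint.mono_right ?_ hcompl.disjoint
    rw [Submodule.span_le]
    rintro x ⟨c, rfl⟩
    exact (b' c).2
  have hre : r + (m - r) = m := by omega
  let e : Fin r ⊕ Fin (m - r) ≃ Fin m := finSumFinEquiv.trans (finCongr hre)
  let v : Fin m → (Fin m → F) := w ∘ e.symm
  have hvli : LinearIndependent F v := hwli.comp e.symm e.symm.injective
  have hv : ∀ (j : Fin m) (hj : (j : ℕ) < r),
      v j = fun i => highCoeffMatrix K i ⟨(j : ℕ), hj⟩ := by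
    intro j hj
    have he : e.symm j = Sum.inl ⟨(j : ℕ), hj⟩ := by
      rw [Equiv.symm_apply_eq]
      apply Fin.ext
      simp [e, finSumFinEquiv]
    show w (e.symm j) = _
    rw [he]
    rfl
  let M : Matrix (Fin m) (Fin m) F := Matrix.of fun i j => v j i
  have hMdet : M.det ≠ 0 := by
    have hMc : LinearIndependent F (fun j => Mᵀ j) := by
      have hMv : (fun j => Mᵀ j) = v := by
        ext j i
        rfl
      rw [hMv]
      exact hvli
    exact ((Matrix.isUnit_iff_isUnit_det M).mp
      (Matrix.linearIndependent_cols_iff_isUnit.mp hMc)).ne_zero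
  let dd : Fin m → ℕ := fun j => if h : (j : ℕ) < r then k' ⟨(j : ℕ), h⟩ else 0
  let P : Matrix (Fin m) (Fin m) F[X] :=
    Matrix.of fun i j => if h : (j : ℕ) < r then K i ⟨(j : ℕ), h⟩ else Polynomial.C (v j i)
  have hPdeg : ∀ i j, (P i j).natDegree ≤ dd j := by
    intro i j
    by_cases h : (j : ℕ) < r
    · show (if h : (j : ℕ) < r then K i ⟨(j : ℕ), h⟩ else Polynomial.C (v j i)).natDegree ≤ _
      rw [dif_pos h]
      show _ ≤ (if h : (j : ℕ) < r then k' ⟨(j : ℕ), h⟩ else 0)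
      rw [dif_pos h]
      exact hKdeg i ⟨(j : ℕ), h⟩
    · show (if h : (j : ℕ) < r then K i ⟨(j : ℕ), h⟩ else Polynomial.C (v j i)).natDegree ≤ _
      rw [dif_neg h]
      simp
  have hPcoeff : ∀ i j, (P i j).coeff (dd j) = M i j := by
    intro i j
    by_cases h : (j : ℕ) < r
    · show (if h : (j : ℕ) < r then K i ⟨(j : ℕ), h⟩ else Polynomial.C (v j i)).coeff
        (if h : (j : ℕ) < r then k' ⟨(j : ℕ), h⟩ else 0) = v j i
      rw [dif_pos h, dif_pos h, hv j h, ← hcdn ⟨(j : ℕ), h⟩]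
      rfl
    · show (if h : (j : ℕ) < r then K i ⟨(j : ℕ), h⟩ else Polynomial.C (v j i)).coeff
        (if h : (j : ℕ) < r then k' ⟨(j : ℕ), h⟩ else 0) = v j i
      rw [dif_neg h, dif_neg h, Polynomial.coeff_C_zero]
  have hdet_coeff : (P.det).coeff (∑ j, dd j) = M.det := by
    rw [st4_det_coeff_top P dd hPdeg]
    congr 1
    ext i j
    exact hPcoeff i j
  have hPdet0 : P.det ≠ 0 := by
    intro h0
    apply hMdet
    rw [← hdet_coeff, h0, Polynomial.coeff_zero]
  have hPdetdeg : (P.det).natDegree = ∑ j, dd j := by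
    refine le_antisymm (st4_det_natDegree_le P dd hPdeg) ?_
    apply Polynomial.le_natDegree_of_ne_zero
    rw [hdet_coeff]
    exact hMdet
  let B : Matrix (Fin m) (Fin m) (RatFunc F) :=
    Matrix.of fun i j =>
      algebraMap F[X] (RatFunc F) (P i j) / algebraMap F[X] (RatFunc F) (Polynomial.X ^ dd j)
  have hXn : ∀ n : ℕ, (Polynomial.X ^ n : F[X]) ≠ 0 := fun n =>
    pow_ne_zero n Polynomial.X_ne_zero
  refine ⟨B, ⟨?_, ?_⟩, ?_⟩
  · intro i j
    exact st4_isProperRat_div (P i j) (Polynomial.X ^ dd j) (hXn _)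
      (by rw [Polynomial.natDegree_X_pow]; exact hPdeg i j)
  · have hBfact : B = ratMap P *
        Matrix.diagonal (fun j => (algebraMap F[X] (RatFunc F) (Polynomial.X ^ dd j))⁻¹) := by
      ext i j
      rw [Matrix.mul_diagonal]
      exact div_eq_mul_inv _ _
    have hdetB : B.det = algebraMap F[X] (RatFunc F) P.det /
        algebraMap F[X] (RatFunc F) (Polynomial.X ^ (∑ j, dd j)) := by
      rw [hBfact, Matrix.det_mul, Matrix.det_diagonal,
        show (ratMap P).det = algebraMap F[X] (RatFunc F) P.det from
          (RingHom.map_det (algebraMap F[X] (RatFunc F)) P).symm,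
        div_eq_mul_inv]
      congr 1
      rw [Finset.prod_inv_distrib, ← map_prod, Finset.prod_pow_eq_pow_sum]
    rw [hdetB]
    exact st4_isBiproperRat_div P.det (Polynomial.X ^ (∑ j, dd j)) hPdet0 (hXn _)
      (by rw [Polynomial.natDegree_X_pow]; exact hPdetdeg)
  · ext i j
    rw [Matrix.mul_apply]
    have hjr : ((j : ℕ) : ℕ) < m := lt_of_lt_of_le j.2 hrm
    have hXne : (RatFunc.X : RatFunc F) ^ (k' j) ≠ 0 :=
      pow_ne_zero _ RatFunc.X_ne_zero
    rw [Finset.sum_eq_single (⟨(j : ℕ), hjr⟩ : Fin m)]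
    · have hlj : ((⟨(j : ℕ), hjr⟩ : Fin m) : ℕ) = (j : ℕ) := rfl
      show ratMap K i j = B i ⟨(j : ℕ), hjr⟩ *
        (if ((⟨(j : ℕ), hjr⟩ : Fin m) : ℕ) = (j : ℕ)
          then (RatFunc.X : RatFunc F) ^ (k' j) else 0)
      rw [if_pos hlj]
      have hP : P i ⟨(j : ℕ), hjr⟩ = K i j := by
        show (if h : ((⟨(j : ℕ), hjr⟩ : Fin m) : ℕ) < r
            then K i ⟨((⟨(j : ℕ), hjr⟩ : Fin m) : ℕ), h⟩ else Polynomial.C (v ⟨(j : ℕ), hjr⟩ i))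
          = K i j
        rw [dif_pos (show ((⟨(j : ℕ), hjr⟩ : Fin m) : ℕ) < r from j.2)]
      have hddj : dd ⟨(j : ℕ), hjr⟩ = k' j := by
        show (if h : ((⟨(j : ℕ), hjr⟩ : Fin m) : ℕ) < r
            then k' ⟨((⟨(j : ℕ), hjr⟩ : Fin m) : ℕ), h⟩ else 0) = k' j
        rw [dif_pos (show ((⟨(j : ℕ), hjr⟩ : Fin m) : ℕ) < r from j.2)]
      show ratMap K i j = algebraMap F[X] (RatFunc F) (P i ⟨(j : ℕ), hjr⟩) /
          algebraMap F[X] (RatFunc F) (Polynomial.X ^ dd ⟨(j : ℕ), hjr⟩) *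
          (RatFunc.X : RatFunc F) ^ (k' j)
      rw [hP, hddj, map_pow, RatFunc.algebraMap_X, div_mul_cancel₀ _ hXne]
      rfl
    · intro l _ hl
      have : ¬ ((l : ℕ) = (j : ℕ)) := by
        intro hc
        apply hl
        apply Fin.ext
        exact hc
      show B i l * (if (l : ℕ) = (j : ℕ) then (RatFunc.X : RatFunc F) ^ (k' j) else 0) = 0
      rw [if_neg this, mul_zero]
    · intro hmem
      exact absurd (Finset.mem_univ _) hmem


end
end

section
/- Let 𝔽 be a field, K(s) ∈ 𝔽[s]^{m×r} and L(s) ∈ 𝔽[s]^{r×n} polynomial matrices of rank r such that K(s) and L(s)^T are column reduced, with k′₁, …, k′_r the column degrees of K(s) and ℓ′₁, …, ℓ′_r the column degrees of L(s)^T. Let Ê(s) ∈ 𝔽[s]^{r×r} be any polynomial matrix, A(s) = K(s)Ê(s)L(s), and F(s) = diag(s^{k′₁}, …, s^{k′_r}) · Ê(s) · diag(s^{ℓ′₁}, …, s^{ℓ′_r}). Then F(s) and A(s) have the same degree and, for every 1 ≤ k ≤ rank Ê(s), M_k(F(s)) = M_k(A(s)); in particular F(s) and A(s) have the same partial multiplicities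 of ∞. -/
open Polynomial Matrix

noncomputable section

variable {F : Type*} [Field F]

/-!
Write `Cₖ(A)` for the `k`-th compound matrix of `A`, whose entries are the `k × k` minors of `A`
with rows and columns indexed by increasing `k`-tuples. Then `M_k(A)` is the largest degree of an
entry of `Cₖ(A)`, and Cauchy–Binet gives `Cₖ(K E L) = Cₖ(K) Cₖ(E) Cₖ(L)` and
`Cₖ(F) = diag(s^w) Cₖ(E) diag(s^v)`, where `w γ = ∑_{j ∈ γ} k'ⱼ` and `v δ = ∑_{j ∈ δ} ℓ'ⱼ`.
Column reducedness passes to compounds: the degree of the entries in column `γ` of `Cₖ(K)` is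
at most `w γ`, the coefficients of `s^{w γ}` form `Cₖ(K_hc)`, and `Cₖ(K_hc)` has a left inverse
because `K_hc` has one; likewise for `L`.

So it suffices to compare the entries of `P Q S` and of `T = diag(s^w) Q diag(s^v)` for polynomial
matrices `P`, `S` of column (row) degrees at most `w` (`v`) whose leading coefficient matrices
`P_hc`, `S_hc` are left (right) invertible. Termwise, every entry of `P Q S` has degree at most
`N`, the largest degree of an entry of `T`, and the coefficient of `s^N` in `P Q S` is
`P_hc G S_hc`, where `G ≠ 0` is the coefficient of `s^N` in `T`; hence `P_hc G S_hc ≠ 0`.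
-/

open Set.powersetCard

namespace Polynomial

variable {R : Type*} [CommRing R]

theorem coeff_mul_mul_add_add {p e q : R[X]} {a c b : ℕ} (hp : p.natDegree ≤ a)
    (he : e.natDegree ≤ c) (hq : q.natDegree ≤ b) :
    (p * e * q).coeff (a + c + b) = p.coeff a * e.coeff c * q.coeff b := by
  rw [coeff_mul_add_eq_of_natDegree_le (natDegree_mul_le_of_le hp he) hq,
    coeff_mul_add_eq_of_natDegree_le hp he]

theorem coeff_prod_sum_of_natDegree_le {ι : Type*} (s : Finset ι) (f : ι → R[X]) (d : ι → ℕ)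
    (h : ∀ i ∈ s, (f i).natDegree ≤ d i) :
    (∏ i ∈ s, f i).coeff (∑ i ∈ s, d i) = ∏ i ∈ s, (f i).coeff (d i) := by
  induction s using Finset.cons_induction with
  | empty => simp
  | cons a s ha ih =>
    rw [Finset.prod_cons, Finset.sum_cons, Finset.prod_cons,
      coeff_mul_add_eq_of_natDegree_le (h a (Finset.mem_cons_self a s))
        ((natDegree_prod_le _ _).trans
          (Finset.sum_le_sum fun i hi => h i (Finset.mem_cons_of_mem hi))),
      ih fun i hi => h i (Finset.mem_cons_of_mem hi)]

variable [Nontrivial R]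

theorem degree_mul_mul_le {p e q : R[X]} {a b : ℕ} {D : WithBot ℕ} (hp : p.natDegree ≤ a)
    (hq : q.natDegree ≤ b) (h : (X ^ a * e * X ^ b).degree ≤ D) : (p * e * q).degree ≤ D := by
  refine le_trans ?_ h
  rw [degree_mul_X_pow, mul_comm (X ^ a), degree_mul_X_pow]
  calc (p * e * q).degree ≤ p.degree + e.degree + q.degree :=
        (degree_mul_le _ _).trans (add_le_add_left (degree_mul_le _ _) _)
    _ ≤ a + e.degree + b := by
        gcongr
        · exact degree_le_of_natDegree_le hp
        · exact degree_le_of_natDegree_le hq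
    _ = e.degree + a + b := by rw [add_comm (a : WithBot ℕ)]

theorem coeff_mul_mul_of_degree_le {p e q : R[X]} {a b N : ℕ} (hp : p.natDegree ≤ a)
    (hq : q.natDegree ≤ b) (h : (X ^ a * e * X ^ b).degree ≤ (N : WithBot ℕ)) :
    (p * e * q).coeff N = p.coeff a * (X ^ a * e * X ^ b).coeff N * q.coeff b := by
  rcases eq_or_ne e 0 with rfl | he
  · simp
  have hN := natDegree_le_of_degree_le h
  rw [natDegree_mul_X_pow b ((monic_X_pow a).mul_right_ne_zero he),
    natDegree_X_pow_mul a he] at hN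
  obtain ⟨c, hc, rfl⟩ : ∃ c, e.natDegree ≤ c ∧ N = a + c + b := ⟨N - a - b, by omega, by omega⟩
  rw [coeff_mul_mul_add_add hp hc hq,
    coeff_mul_mul_add_add (natDegree_X_pow_le a) hc (natDegree_X_pow_le b),
    coeff_X_pow_self, coeff_X_pow_self, one_mul, mul_one]

end Polynomial

namespace Matrix

section Compound

variable {R : Type*} [CommRing R] {k : ℕ}

theorem det_mul_eq_sum_powersetCard {n : Type*} [Fintype n] [LinearOrder n]
    (A : Matrix (Fin k) n R) (B : Matrix n (Fin k) R) :
    (A * B).det = ∑ t : Set.powersetCard n k,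
      (A.submatrix id (ofFinEmbEquiv.symm t)).det *
        (B.submatrix (ofFinEmbEquiv.symm t) id).det := by
  classical
  -- pair `⋀ (rows of A)` with `⋀ (columns of B)`, the latter expanded in the standard basis
  have key := congrArg (exteriorPower.pairingDual R (n → R) k
      (exteriorPower.ιMulti R k fun j => .proj j ∘ₗ A.mulVecLin))
    (((Pi.basisFun R n).exteriorPower k).sum_repr (exteriorPower.ιMulti R k B.col))
  simp only [map_sum, map_smul, exteriorPower.basis_repr_apply, exteriorPower.coe_basis,
    exteriorPower.ιMulti_family, exteriorPower.ιMultiDual_apply_ιMulti,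
    exteriorPower.pairingDual_ιMulti_ιMulti] at key
  rw [← det_transpose]
  refine key.symm.trans (Finset.sum_congr rfl fun t _ => ?_)
  rw [smul_eq_mul, mul_comm, ← det_transpose (A.submatrix _ _),
    ← det_transpose (B.submatrix _ _)]
  congr 2
  ext i j
  simp [mulVec, dotProduct, Pi.single_apply]

theorem det_submatrix_mul_eq_sum {l n o : Type*} [Fintype n] [LinearOrder n]
    (A : Matrix l n R) (B : Matrix n o R) (α : Fin k → l) (β : Fin k → o) :
    ((A * B).submatrix α β).det = ∑ t : Set.powersetCard n k,
      (A.submatrix α (ofFinEmbEquiv.symm t)).det *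
        (B.submatrix (ofFinEmbEquiv.symm t) β).det := by
  rw [submatrix_mul A B α id β Function.bijective_id, det_mul_eq_sum_powersetCard]
  rfl

variable {m n o : Type*} [LinearOrder m] [LinearOrder n] [LinearOrder o]

def compound (k : ℕ) (A : Matrix m n R) :
    Matrix (Set.powersetCard m k) (Set.powersetCard n k) R :=
  of fun s t => (A.submatrix (ofFinEmbEquiv.symm s) (ofFinEmbEquiv.symm t)).det

theorem compound_mul [Fintype n] (A : Matrix m n R) (B : Matrix n o R) :
    compound k (A * B) = compound k A * compound k B := by
  ext s t
  exact det_submatrix_mul_eq_sum A B _ _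

theorem compound_transpose (A : Matrix m n R) : compound k Aᵀ = (compound k A)ᵀ := by
  ext s t
  simp [compound, ← transpose_submatrix]

theorem compound_diagonal (d : m → R) :
    compound k (diagonal d) = diagonal fun s => ∏ j, d (ofFinEmbEquiv.symm s j) := by
  ext s t
  rcases eq_or_ne s t with rfl | hst
  · simp [compound, submatrix_diagonal _ _ (ofFinEmbEquiv.symm s).injective]
  · obtain ⟨a, hat, has⟩ := (exists_mem_notMem_iff_ne t s).mp hst.symm
    obtain ⟨j, rfl⟩ := (mem_range_ofFinEmbEquiv_symm_iff_mem t _).mpr hat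
    rw [diagonal_apply_ne _ hst]
    refine det_eq_zero_of_column_eq_zero j fun i => diagonal_apply_ne _ fun h => has ?_
    exact (mem_range_ofFinEmbEquiv_symm_iff_mem s _).mp ⟨i, h⟩

theorem compound_one : compound k (1 : Matrix m m R) = 1 := by
  simpa using compound_diagonal (k := k) fun _ : m => (1 : R)

end Compound

variable {R : Type*} [CommRing R] {l m n o : Type*}

def colCoeff (P : Matrix m n R[X]) (d : n → ℕ) : Matrix m n R :=
  of fun i j => (P i j).coeff (d j)

def maxEntryDegree [Fintype m] [Fintype n] (P : Matrix m n R[X]) : WithBot ℕ :=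
  Finset.univ.sup fun ij : m × n => (P ij.1 ij.2).degree

theorem degree_le_maxEntryDegree [Fintype m] [Fintype n] (P : Matrix m n R[X]) (i : m)
    (j : n) : (P i j).degree ≤ maxEntryDegree P :=
  Finset.le_sup (f := fun ij : m × n => (P ij.1 ij.2).degree) (Finset.mem_univ (i, j))

theorem exists_degree_eq_maxEntryDegree [Fintype m] [Fintype n] (P : Matrix m n R[X])
    (h : maxEntryDegree P ≠ ⊥) : ∃ i j, (P i j).degree = maxEntryDegree P := by
  have hne : (Finset.univ : Finset (m × n)).Nonempty :=
    Finset.nonempty_iff_ne_empty.mpr fun he => h (by simp [maxEntryDegree, he])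
  obtain ⟨⟨i, j⟩, -, hij⟩ := Finset.exists_mem_eq_sup _ hne fun ij => (P ij.1 ij.2).degree
  exact ⟨i, j, hij.symm⟩

theorem mul_mul_apply_eq_sum [Fintype m] [Fintype n] (P : Matrix l m R) (Q : Matrix m n R)
    (S : Matrix n o R) (a : l) (b : o) :
    (P * Q * S) a b = ∑ j, ∑ i, P a i * Q i j * S j b := by
  simp only [mul_apply, Finset.sum_mul]

section ColumnDegrees

variable [Fintype n] [DecidableEq n]

theorem natDegree_det_le_of_natDegree_le {M : Matrix n n R[X]} {d : n → ℕ}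
    (h : ∀ i j, (M i j).natDegree ≤ d j) : M.det.natDegree ≤ ∑ j, d j := by
  rw [det_apply]
  refine natDegree_sum_le_of_forall_le _ _ fun σ _ => (natDegree_smul_le _ _).trans ?_
  exact (natDegree_prod_le _ _).trans (Finset.sum_le_sum fun i _ => h (σ i) i)

theorem coeff_det_eq_det_colCoeff {M : Matrix n n R[X]} {d : n → ℕ}
    (h : ∀ i j, (M i j).natDegree ≤ d j) : M.det.coeff (∑ j, d j) = (colCoeff M d).det := by
  rw [det_apply, det_apply, finsetSum_coeff]
  refine Finset.sum_congr rfl fun σ _ => ?_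
  rw [coeff_smul, coeff_prod_sum_of_natDegree_le _ _ _ fun i _ => h (σ i) i]
  rfl

theorem natDegree_det_submatrix_one {p : Type*} [DecidableEq p] (α β : n → p) :
    ((1 : Matrix p p R[X]).submatrix α β).det.natDegree = 0 :=
  Nat.le_zero.mp <| by
    simpa using natDegree_det_le_of_natDegree_le (d := 0) fun i j => by
      simp only [submatrix_apply, one_apply]
      split_ifs <;> simp

end ColumnDegrees

section CompoundDegrees

variable [LinearOrder m] [LinearOrder n] {k : ℕ} {P : Matrix m n R[X]} {d : n → ℕ}

theorem natDegree_compound_le (h : ∀ i j, (P i j).natDegree ≤ d j)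
    (s : Set.powersetCard m k) (t : Set.powersetCard n k) :
    (compound k P s t).natDegree ≤ ∑ j, d (ofFinEmbEquiv.symm t j) :=
  natDegree_det_le_of_natDegree_le fun _ _ => h _ _

theorem colCoeff_compound (h : ∀ i j, (P i j).natDegree ≤ d j) :
    colCoeff (compound k P) (fun t => ∑ j, d (ofFinEmbEquiv.symm t j)) =
      compound k (colCoeff P d) := by
  ext s t
  exact coeff_det_eq_det_colCoeff fun _ _ => h _ _

end CompoundDegrees

theorem maxMinorDegree_eq_maxEntryDegree_compound {m n : ℕ} (A : Matrix (Fin m) (Fin n) F[X])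
    (k : ℕ) : maxMinorDegree A k = maxEntryDegree (compound k A) := by
  refine le_antisymm (Finset.sup_le fun ⟨α, β⟩ _ => ?_) (Finset.sup_le fun st _ =>
    Finset.le_sup (f := fun αβ : (Fin k → Fin m) × (Fin k → Fin n) =>
      ((A.submatrix αβ.1 αβ.2).det).degree) (Finset.mem_univ (_, _)))
  -- Cauchy–Binet for `1 * A * 1` writes any minor through the increasing ones, with constant
  -- coefficients
  have hA : A.submatrix α β =
      ((1 : Matrix (Fin m) (Fin m) F[X]) * A * (1 : Matrix (Fin n) (Fin n) F[X])).submatrix α β :=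
    by simp
  rw [hA, det_submatrix_mul_eq_sum]
  refine (degree_sum_le _ _).trans (Finset.sup_le fun t _ => ?_)
  rw [det_submatrix_mul_eq_sum, Finset.sum_mul]
  refine (degree_sum_le _ _).trans (Finset.sup_le fun s _ => ?_)
  refine degree_mul_mul_le (natDegree_det_submatrix_one _ _).le
    (natDegree_det_submatrix_one _ _).le ?_
  simpa [compound] using degree_le_maxEntryDegree (compound k A) s t

section WeightedProduct

variable [Nontrivial R] [Fintype m] [Fintype n]
  {P : Matrix l m R[X]} {S : Matrix n o R[X]} {w : m → ℕ} {v : n → ℕ}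

theorem degree_mul_mul_apply_le (hP : ∀ i j, (P i j).natDegree ≤ w j)
    (hS : ∀ i j, (S i j).natDegree ≤ v i) (Q : Matrix m n R[X]) {D : WithBot ℕ}
    (hQ : ∀ i j, (X ^ w i * Q i j * X ^ v j).degree ≤ D) (a : l) (b : o) :
    ((P * Q * S) a b).degree ≤ D := by
  rw [mul_mul_apply_eq_sum]
  refine (degree_sum_le _ _).trans (Finset.sup_le fun j _ => ?_)
  refine (degree_sum_le _ _).trans (Finset.sup_le fun i _ => ?_)
  exact degree_mul_mul_le (hP a i) (hS j b) (hQ i j)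

theorem coeff_mul_mul_apply (hP : ∀ i j, (P i j).natDegree ≤ w j)
    (hS : ∀ i j, (S i j).natDegree ≤ v i) (Q : Matrix m n R[X]) {N : ℕ}
    (hQ : ∀ i j, (X ^ w i * Q i j * X ^ v j).degree ≤ (N : WithBot ℕ)) (a : l) (b : o) :
    ((P * Q * S) a b).coeff N = (colCoeff P w *
      (Matrix.of fun i j => (X ^ w i * Q i j * X ^ v j).coeff N) * (colCoeff Sᵀ v)ᵀ) a b := by
  rw [mul_mul_apply_eq_sum, mul_mul_apply_eq_sum, finsetSum_coeff]
  refine Finset.sum_congr rfl fun j _ => ?_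
  rw [finsetSum_coeff]
  refine Finset.sum_congr rfl fun i _ => ?_
  rw [coeff_mul_mul_of_degree_le (hP a i) (hS j b) (hQ i j)]
  simp [colCoeff]

variable [DecidableEq m] [DecidableEq n]

theorem maxEntryDegree_mul_mul_le [Fintype l] [Fintype o]
    (hP : ∀ i j, (P i j).natDegree ≤ w j) (hS : ∀ i j, (S i j).natDegree ≤ v i)
    (Q : Matrix m n R[X]) :
    maxEntryDegree (P * Q * S) ≤ maxEntryDegree
      ((diagonal fun i => (X : R[X]) ^ w i) * Q * diagonal fun j => (X : R[X]) ^ v j) := by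
  refine Finset.sup_le fun ab _ => degree_mul_mul_apply_le hP hS Q (fun i j => ?_) ab.1 ab.2
  simpa only [mul_diagonal, diagonal_mul] using degree_le_maxEntryDegree
    ((diagonal fun i => (X : R[X]) ^ w i) * Q * diagonal fun j => (X : R[X]) ^ v j) i j

theorem maxEntryDegree_le_mul_mul [Fintype l] [Fintype o]
    (hP : ∀ i j, (P i j).natDegree ≤ w j) (hS : ∀ i j, (S i j).natDegree ≤ v i)
    (hPc : ∃ P' : Matrix m l R, P' * colCoeff P w = 1)
    (hSc : ∃ S' : Matrix n o R, S' * colCoeff Sᵀ v = 1) (Q : Matrix m n R[X]) :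
    maxEntryDegree ((diagonal fun i => (X : R[X]) ^ w i) * Q *
      diagonal fun j => (X : R[X]) ^ v j) ≤ maxEntryDegree (P * Q * S) := by
  set T := (diagonal fun i => (X : R[X]) ^ w i) * Q * diagonal fun j => (X : R[X]) ^ v j
  have hT : ∀ i j, T i j = X ^ w i * Q i j * X ^ v j := fun i j => by
    simp only [T, mul_diagonal, diagonal_mul]
  cases hN : maxEntryDegree T with
  | bot => exact bot_le
  | coe N =>
  have hTN : ∀ i j, (X ^ w i * Q i j * X ^ v j).degree ≤ (N : WithBot ℕ) := fun i j => by
    rw [← hT, Nat.cast_withBot, ← hN]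
    exact degree_le_maxEntryDegree T i j
  obtain ⟨i₀, j₀, hij⟩ := exists_degree_eq_maxEntryDegree T (by simp [hN])
  set G : Matrix m n R := of fun i j => (X ^ w i * Q i j * X ^ v j).coeff N
  have hG : G ≠ 0 := fun h0 => by
    refine coeff_ne_zero_of_eq_degree (hij.trans hN) ?_
    simpa [hT, G] using congrFun (congrFun h0 i₀) j₀
  obtain ⟨P', hP'⟩ := hPc
  obtain ⟨S', hS'⟩ := hSc
  obtain ⟨a, b, hab⟩ : ∃ a b, ((P * Q * S) a b).coeff N ≠ 0 := by
    by_contra! h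
    have hzero : colCoeff P w * G * (colCoeff Sᵀ v)ᵀ = 0 := by
      ext a b
      rw [← coeff_mul_mul_apply hP hS Q hTN, h, zero_apply]
    have hS'' : (colCoeff Sᵀ v)ᵀ * S'ᵀ = 1 := by rw [← transpose_mul, hS', transpose_one]
    exact hG (mul_right_injective_of_inv _ _ hP' (mul_left_injective_of_inv _ _ hS''
      (by simpa using hzero)))
  exact (le_degree_of_ne_zero hab).trans (degree_le_maxEntryDegree _ a b)

theorem maxEntryDegree_mul_mul_eq [Fintype l] [Fintype o]
    (hP : ∀ i j, (P i j).natDegree ≤ w j) (hS : ∀ i j, (S i j).natDegree ≤ v i)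
    (hPc : ∃ P' : Matrix m l R, P' * colCoeff P w = 1)
    (hSc : ∃ S' : Matrix n o R, S' * colCoeff Sᵀ v = 1) (Q : Matrix m n R[X]) :
    maxEntryDegree (P * Q * S) = maxEntryDegree
      ((diagonal fun i => (X : R[X]) ^ w i) * Q * diagonal fun j => (X : R[X]) ^ v j) :=
  (maxEntryDegree_mul_mul_le hP hS Q).antisymm (maxEntryDegree_le_mul_mul hP hS hPc hSc Q)

end WeightedProduct

theorem exists_mul_eq_one_of_rank_eq {K : Type*} [Field K] [Fintype m] [Fintype n]
    [DecidableEq n] {A : Matrix m n K} (h : A.rank = Fintype.card n) :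
    ∃ B : Matrix n m K, B * A = 1 := by
  rw [← vecMul_surjective_iff_exists_left_inverse, ← coe_vecMulLinear, ← LinearMap.range_eq_top]
  apply Submodule.eq_top_of_finrank_eq
  rw [← mulVecLin_transpose, ← rank, rank_transpose, h, Module.finrank_fintype_fun_eq_card]

end Matrix

theorem natDegree_le_colDegNat {m n : ℕ} (P : Matrix (Fin m) (Fin n) F[X]) (i : Fin m)
    (j : Fin n) : (P i j).natDegree ≤ colDegNat P j :=
  Finset.le_sup (f := fun i => (P i j).natDegree) (Finset.mem_univ i)

theorem colDegNat_eq_of_colDegree_eq {m n : ℕ} {P : Matrix (Fin m) (Fin n) F[X]} {j : Fin n}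
    {d : ℕ} (h : colDegree P j = d) : colDegNat P j = d := by
  have hne : (Finset.univ : Finset (Fin m)).Nonempty :=
    Finset.nonempty_iff_ne_empty.mpr fun he => by simp [colDegree, he] at h
  obtain ⟨i, -, hi⟩ := Finset.exists_mem_eq_sup _ hne fun i => (P i j).degree
  refine le_antisymm (Finset.sup_le fun i _ => natDegree_le_of_degree_le ?_) ?_
  · exact h ▸ Finset.le_sup (f := fun i => (P i j).degree) (Finset.mem_univ i)
  · rw [← natDegree_eq_of_degree_eq_some (hi.symm.trans h)]
    exact natDegree_le_colDegNat P i j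

theorem IsColumnReduced.exists_mul_highCoeffMatrix_eq_one {m n : ℕ}
    {P : Matrix (Fin m) (Fin n) F[X]} (hP : IsColumnReduced P) (hnm : n ≤ m) :
    ∃ Q : Matrix (Fin n) (Fin m) F, Q * highCoeffMatrix P = 1 :=
  exists_mul_eq_one_of_rank_eq (by rw [hP, min_eq_right hnm, Fintype.card_fin])

theorem matDegree_eq_maxMinorDegree_one {m n : ℕ} (P : Matrix (Fin m) (Fin n) F[X]) :
    matDegree P = maxMinorDegree P 1 := by
  refine le_antisymm (Finset.sup_le fun ij _ => ?_) (Finset.sup_le fun fg _ => ?_)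
  · simpa [maxMinorDegree] using Finset.le_sup (f := fun fg : (Fin 1 → Fin m) × (Fin 1 → Fin n) =>
      ((P.submatrix fg.1 fg.2).det).degree) (Finset.mem_univ (fun _ => ij.1, fun _ => ij.2))
  · rw [det_fin_one]
    exact degree_le_maxEntryDegree P (fg.1 0) (fg.2 0)

theorem maxMinorDegree_mul_mul_eq {m n r : ℕ} (K : Matrix (Fin m) (Fin r) F[X])
    (E : Matrix (Fin r) (Fin r) F[X]) (L : Matrix (Fin r) (Fin n) F[X])
    (hK : ∃ Q : Matrix (Fin r) (Fin m) F, Q * highCoeffMatrix K = 1)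
    (hL : ∃ Q : Matrix (Fin r) (Fin n) F, Q * highCoeffMatrix Lᵀ = 1) (k : ℕ) :
    maxMinorDegree (K * E * L) k = maxMinorDegree
      (diagonal (fun i => X ^ colDegNat K i) * E * diagonal fun i => X ^ colDegNat Lᵀ i) k := by
  obtain ⟨Q, hQ⟩ := hK
  obtain ⟨Q', hQ'⟩ := hL
  simp only [maxMinorDegree_eq_maxEntryDegree_compound, compound_mul, compound_diagonal,
    Finset.prod_pow_eq_pow_sum]
  refine maxEntryDegree_mul_mul_eq (natDegree_compound_le (natDegree_le_colDegNat K)) ?_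
    ⟨compound k Q, ?_⟩ ⟨compound k Q', ?_⟩ _
  · intro t b
    rw [← transpose_apply (compound k L), ← compound_transpose]
    exact natDegree_compound_le (natDegree_le_colDegNat Lᵀ) b t
  · rw [colCoeff_compound (natDegree_le_colDegNat K), ← compound_mul]
    exact (congrArg _ hQ).trans compound_one
  · rw [← compound_transpose, colCoeff_compound (natDegree_le_colDegNat Lᵀ), ← compound_mul]
    exact (congrArg _ hQ').trans compound_one

theorem statement6_general {m n r ρ : ℕ}
    (K : Matrix (Fin m) (Fin r) F[X]) (L : Matrix (Fin r) (Fin n) F[X])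
    (hKrank : (ratMap K).rank = r) (hLrank : (ratMap L).rank = r)
    (hKred : IsColumnReduced K) (hLred : IsColumnReduced Lᵀ)
    (k' l' : Fin r → ℕ)
    (hkdeg : ∀ j, colDegree K j = (k' j : WithBot ℕ))
    (hldeg : ∀ j, colDegree Lᵀ j = (l' j : WithBot ℕ))
    (E : Matrix (Fin r) (Fin r) F[X]) :
    matDegree (Matrix.diagonal (fun i => X ^ k' i) * E * Matrix.diagonal (fun i => X ^ l' i))
        = matDegree (K * E * L) ∧
    (∀ kk : ℕ, 1 ≤ kk → kk ≤ ρ →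
      maxMinorDegree
          (Matrix.diagonal (fun i => X ^ k' i) * E * Matrix.diagonal (fun i => X ^ l' i)) kk
        = maxMinorDegree (K * E * L) kk) ∧
    (∀ (d : ℕ) (f : Fin ρ → ℕ),
      HasInftyPartialMults
          (Matrix.diagonal (fun i => X ^ k' i) * E * Matrix.diagonal (fun i => X ^ l' i)) d f
        ↔ HasInftyPartialMults (K * E * L) d f) := by
  have hrm : r ≤ m := by simpa [hKrank] using rank_le_card_height (ratMap K)
  have hrn : r ≤ n := by simpa [hLrank] using rank_le_card_width (ratMap L)
  obtain rfl : k' = colDegNat K := funext fun j => (colDegNat_eq_of_colDegree_eq (hkdeg j)).symm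
  obtain rfl : l' = colDegNat Lᵀ := funext fun j => (colDegNat_eq_of_colDegree_eq (hldeg j)).symm
  have key := maxMinorDegree_mul_mul_eq K E L (hKred.exists_mul_highCoeffMatrix_eq_one hrm)
    (hLred.exists_mul_highCoeffMatrix_eq_one hrn)
  refine ⟨by rw [matDegree_eq_maxMinorDegree_one, matDegree_eq_maxMinorDegree_one, key],
    fun kk _ _ => (key kk).symm, fun d f => ?_⟩
  simp only [HasInftyPartialMults, key]

theorem statement6 {m n r ρ : ℕ}
    (K : Matrix (Fin m) (Fin r) F[X]) (L : Matrix (Fin r) (Fin n) F[X])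
    (hKrank : (ratMap K).rank = r) (hLrank : (ratMap L).rank = r)
    (hKred : IsColumnReduced K) (hLred : IsColumnReduced Lᵀ)
    (k' l' : Fin r → ℕ)
    (hkdeg : ∀ j, colDegree K j = (k' j : WithBot ℕ))
    (hldeg : ∀ j, colDegree Lᵀ j = (l' j : WithBot ℕ))
    (E : Matrix (Fin r) (Fin r) F[X]) (hρ : (ratMap E).rank = ρ) :
    matDegree (Matrix.diagonal (fun i => X ^ k' i) * E * Matrix.diagonal (fun i => X ^ l' i))
        = matDegree (K * E * L) ∧
    (∀ kk : ℕ, 1 ≤ kk → kk ≤ ρ →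
      maxMinorDegree
          (Matrix.diagonal (fun i => X ^ k' i) * E * Matrix.diagonal (fun i => X ^ l' i)) kk
        = maxMinorDegree (K * E * L) kk) ∧
    (∀ (d : ℕ) (f : Fin ρ → ℕ),
      HasInftyPartialMults
          (Matrix.diagonal (fun i => X ^ k' i) * E * Matrix.diagonal (fun i => X ^ l' i)) d f
        ↔ HasInftyPartialMults (K * E * L) d f) :=
  statement6_general K L hKrank hLrank hKred hLred k' l' hkdeg hldeg E

end
end
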